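/- arXiv:math/0307050 — 6 statements merged into one kernel-verified Lean document; each statement's English description precedes it below -/
import Mathlib

section
/- For all integers k, all a, b ≥ 0, all π_1 ∈ I_a(3412) and all π_2 ∈ I_b(3412), one has τ_k(π_1 * π_2) = C(0,k−1) + C(1,k−1) + τ_{k−2}(π_1) + 2·τ_{k−1}(π_1) + τ_k(π_1) + τ_k(π_2), where C(a,b) is the binomial coefficient (equal to 0 if b < 0 or b > a). -/
/-!
Write `π₁ * π₂` as the direct sum of `σ = (a+2) π₁^{+1} 1` and `π₂`. A decreasing subsequence of
a direct sum lies in one of the two blocks, so `τ_k` is additive for `k ≠ 0`. A decreasing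
subsequence of `σ` is a decreasing subsequence of `π₁` together with a free choice of using the
leading maximum and the trailing minimum, so `τ_k(σ) = τ_k + 2 τ_{k-1} + τ_{k-2}` (of `π₁`) once
`τ_0 = 1`; the binomial terms of the statement are exactly the contributions of `τ_0`. Appending
a minimum reduces to prepending a maximum under the reverse-complement symmetry.
-/

/-- `π` (a sequence of length `n` with values in `Fin n`) contains the pattern `σ` of length `k`:
there is a strictly increasing choice of positions on which `π` has the same pairwise
comparisons as `σ`. -/
def Contains {n k : ℕ} (π : Fin n → Fin n) (σ : Fin k → Fin k) : Prop :=
  ∃ f : Fin k → Fin n, StrictMono f ∧ ∀ a b : Fin k, σ a < σ b ↔ π (f a) < π (f b)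

/-- `π` avoids the pattern `σ`. -/
def Avoids {n k : ℕ} (π : Fin n → Fin n) (σ : Fin k → Fin k) : Prop :=
  ¬ Contains π σ

/-- The pattern 3412, written 0-indexed. -/
def pat3412 : Fin 4 → Fin 4 := ![2, 3, 0, 1]

/-- The permutation `π₁ * π₂` of length `a + b + 2`: the sequence
`(a+2), π₁^{+1}, 1, π₂^{+(a+2)}` (written here 0-indexed). -/
def starFun {a b : ℕ} (f : Fin a → Fin a) (g : Fin b → Fin b) :
    Fin (a + b + 2) → Fin (a + b + 2) := fun i =>
  if h0 : (i : ℕ) = 0 then ⟨a + 1, by omega⟩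
  else if h1 : (i : ℕ) ≤ a then
    have hlt : (i : ℕ) - 1 < a := by omega
    ⟨(f ⟨(i : ℕ) - 1, hlt⟩ : ℕ) + 1, by have := (f ⟨(i : ℕ) - 1, hlt⟩).isLt; omega⟩
  else if h2 : (i : ℕ) = a + 1 then ⟨0, by omega⟩
  else
    have hlt : (i : ℕ) - (a + 2) < b := by have := i.isLt; omega
    ⟨(g ⟨(i : ℕ) - (a + 2), hlt⟩ : ℕ) + (a + 2),
      by have := (g ⟨(i : ℕ) - (a + 2), hlt⟩).isLt; omega⟩

/-- `tau π k` is the number of decreasing subsequences of length `k` in `π`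
(subsequences of type `k (k-1) ... 2 1`). -/
noncomputable def tau {n : ℕ} (π : Fin n → Fin n) (k : ℕ) : ℕ :=
  Nat.card {f : Fin k → Fin n // StrictMono f ∧ ∀ a b : Fin k, a < b → π (f b) < π (f a)}

/-- `tau` with an integer index, with the convention that `τ_k = 0` for `k ≤ 0`. -/
noncomputable def tauZ {n : ℕ} (π : Fin n → Fin n) (k : ℤ) : ℕ :=
  if k ≤ 0 then 0 else tau π k.toNat

/-- Binomial coefficient `C(a, b)` with an integer lower index, equal to `0` when `b < 0`. -/
def chooseZ (a : ℕ) (b : ℤ) : ℕ := if b < 0 then 0 else a.choose b.toNat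

namespace Decreasing

variable {n m N : ℕ}

def DecSeq (π : Fin n → Fin n) (m : ℕ) : Type :=
  {f : Fin m → Fin n // StrictMono f ∧ StrictAnti (π ∘ f)}

theorem tau_eq_card (π : Fin n → Fin n) (m : ℕ) : tau π m = Nat.card (DecSeq π m) := rfl

instance (π : Fin n → Fin n) (m : ℕ) : Finite (DecSeq π m) := Subtype.finite

theorem tau_zero (π : Fin n → Fin n) : tau π 0 = 1 :=
  Nat.card_eq_one_iff_unique.mpr
    ⟨⟨fun _ _ => Subtype.ext (Subsingleton.elim _ _)⟩,
      ⟨⟨Fin.elim0, fun a => a.elim0, fun a => a.elim0⟩⟩⟩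

theorem tau_cast {n' : ℕ} (h : n = n') (π : Fin n → Fin n) (m : ℕ) :
    tau (Fin.cast h ∘ π ∘ Fin.cast h.symm) m = tau π m := by
  subst h; rfl

section Transfer

variable {π : Fin n → Fin n} {π' : Fin N → Fin N} {e : Fin n → Fin N}

theorem isDecreasing_comp_iff (he : StrictMono e)
    (hπ : ∀ i j, π' (e i) < π' (e j) ↔ π i < π j) {f : Fin m → Fin n} :
    (StrictMono (e ∘ f) ∧ StrictAnti (π' ∘ e ∘ f)) ↔ (StrictMono f ∧ StrictAnti (π ∘ f)) := by
  simp only [StrictMono, StrictAnti, Function.comp_apply, he.lt_iff_lt, hπ]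

def DecSeq.map (he : StrictMono e) (hπ : ∀ i j, π' (e i) < π' (e j) ↔ π i < π j)
    (f : DecSeq π m) : DecSeq π' m :=
  ⟨e ∘ f.1, (isDecreasing_comp_iff he hπ).mpr f.2⟩

theorem DecSeq.map_injective (he : StrictMono e)
    (hπ : ∀ i j, π' (e i) < π' (e j) ↔ π i < π j) :
    Function.Injective (DecSeq.map (m := m) he hπ) := fun _ _ hfg =>
  Subtype.ext (he.injective.comp_left (congrArg Subtype.val hfg))

theorem DecSeq.exists_map_eq (he : StrictMono e)
    (hπ : ∀ i j, π' (e i) < π' (e j) ↔ π i < π j) (g : DecSeq π' m)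
    (hg : ∀ i, g.1 i ∈ Set.range e) : ∃ f, DecSeq.map he hπ f = g := by
  obtain ⟨f, hf⟩ := Set.range_subset_range_iff_exists_comp.mp (Set.range_subset_iff.mpr hg)
  have hdec := g.2
  rw [hf] at hdec
  exact ⟨⟨f, (isDecreasing_comp_iff he hπ).mp hdec⟩, Subtype.ext hf.symm⟩

end Transfer

theorem isDecreasing_cons_iff {π : Fin n → Fin n} (x : Fin n) (g : Fin m → Fin n) :
    (StrictMono (Fin.cons x g : Fin (m + 1) → Fin n) ∧ StrictAnti (π ∘ Fin.cons x g)) ↔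
      (StrictMono g ∧ StrictAnti (π ∘ g)) ∧ ∀ i, x < g i ∧ π (g i) < π x := by
  simp only [StrictMono, StrictAnti, Fin.forall_fin_succ, Fin.cons_zero, Fin.cons_succ,
    Function.comp_apply, Fin.succ_lt_succ_iff, Fin.succ_pos, Fin.not_lt_zero, IsEmpty.forall_iff,
    forall_true_left, true_and]
  exact ⟨fun ⟨⟨hx, hg⟩, hπx, hπg⟩ => ⟨⟨hg, hπg⟩, fun i => ⟨hx i, hπx i⟩⟩,
    fun ⟨⟨hg, hπg⟩, h⟩ => ⟨⟨fun i => (h i).1, hg⟩, fun i => (h i).2, hπg⟩⟩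

def consMax (π : Fin n → Fin n) : Fin (n + 1) → Fin (n + 1) :=
  Fin.cons (Fin.last n) (Fin.castSucc ∘ π)

theorem consMax_succ_lt_succ_iff (π : Fin n → Fin n) (i j : Fin n) :
    consMax π i.succ < consMax π j.succ ↔ π i < π j := by
  simp [consMax]

theorem tau_consMax_succ (π : Fin n → Fin n) (m : ℕ) :
    tau (consMax π) (m + 1) = tau π (m + 1) + tau π m := by
  let shift {k : ℕ} : DecSeq π k → DecSeq (consMax π) k :=
    DecSeq.map Fin.strictMono_succ (consMax_succ_lt_succ_iff π)
  let extend : DecSeq π m → DecSeq (consMax π) (m + 1) := fun f =>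
    ⟨Fin.cons 0 (shift f).1, (isDecreasing_cons_iff _ _).mpr
      ⟨(shift f).2, fun _ => ⟨Fin.succ_pos _, by simp [shift, DecSeq.map, consMax]⟩⟩⟩
  -- A decreasing subsequence of `consMax π` either avoids position `0` or starts there.
  rw [tau_eq_card, tau_eq_card, tau_eq_card, ← Nat.card_sum]
  refine (Nat.card_eq_of_bijective (Sum.elim shift extend) ⟨?_, fun g => ?_⟩).symm
  · refine (DecSeq.map_injective _ _).sumElim (fun _ _ h => ?_) (fun _ _ h => ?_)
    · have htail := Fin.cons_right_injective (α := fun _ => Fin (n + 1)) 0 (congrArg Subtype.val h)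
      exact DecSeq.map_injective _ _ (Subtype.ext htail)
    · exact Fin.succ_ne_zero _ (congrArg (fun g => g.1 0) h)
  by_cases h0 : g.1 0 = 0
  · have hg := g.2
    rw [← Fin.cons_self_tail g.1] at hg
    obtain ⟨htail, hhead⟩ := (isDecreasing_cons_iff _ _).mp hg
    obtain ⟨f, hf⟩ := DecSeq.exists_map_eq Fin.strictMono_succ (consMax_succ_lt_succ_iff π)
      ⟨Fin.tail g.1, htail⟩ fun i => Fin.exists_succ_eq.mpr (Fin.ne_zero_of_lt (hhead i).1)
    refine ⟨Sum.inr f, Subtype.ext ?_⟩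
    change Fin.cons 0 (shift f).1 = g.1
    rw [congrArg Subtype.val hf, ← h0, Fin.cons_self_tail]
  · have hpos (i : Fin (m + 1)) : g.1 i ≠ 0 :=
      Fin.ne_zero_of_lt ((Fin.pos_iff_ne_zero.mpr h0).trans_le (g.2.1.monotone (Fin.zero_le i)))
    obtain ⟨f, hf⟩ := DecSeq.exists_map_eq Fin.strictMono_succ (consMax_succ_lt_succ_iff π) g
      fun i => Fin.exists_succ_eq.mpr (hpos i)
    exact ⟨Sum.inl f, hf⟩

def revCompl (π : Fin n → Fin n) : Fin n → Fin n :=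
  Fin.rev ∘ π ∘ Fin.rev

theorem revCompl_revCompl (π : Fin n → Fin n) : revCompl (revCompl π) = π := by
  funext i
  simp [revCompl]

theorem isDecreasing_rev_comp_rev {π : Fin n → Fin n} {f : Fin m → Fin n}
    (hf : StrictMono f ∧ StrictAnti (π ∘ f)) :
    StrictMono (Fin.rev ∘ f ∘ Fin.rev) ∧ StrictAnti (revCompl π ∘ Fin.rev ∘ f ∘ Fin.rev) := by
  have hcomp : revCompl π ∘ Fin.rev ∘ f ∘ Fin.rev = Fin.rev ∘ (π ∘ f) ∘ Fin.rev := by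
    funext i
    simp [revCompl]
  rw [hcomp]
  exact ⟨Fin.rev_strictAnti.comp (hf.1.comp_strictAnti Fin.rev_strictAnti),
    Fin.rev_strictAnti.comp_strictMono (hf.2.comp Fin.rev_strictAnti)⟩

theorem tau_revCompl (π : Fin n → Fin n) (m : ℕ) : tau (revCompl π) m = tau π m := by
  rw [tau_eq_card, tau_eq_card]
  refine Nat.card_congr
    { toFun g := ⟨Fin.rev ∘ g.1 ∘ Fin.rev, ?_⟩
      invFun f := ⟨Fin.rev ∘ f.1 ∘ Fin.rev, isDecreasing_rev_comp_rev f.2⟩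
      left_inv g := Subtype.ext (funext fun _ => by simp)
      right_inv f := Subtype.ext (funext fun _ => by simp) }
  have hg := isDecreasing_rev_comp_rev g.2
  rwa [revCompl_revCompl] at hg

def snocMin (π : Fin n → Fin n) : Fin (n + 1) → Fin (n + 1) :=
  Fin.snoc (α := fun _ => Fin (n + 1)) (Fin.succ ∘ π) 0

theorem snocMin_eq_revCompl (π : Fin n → Fin n) :
    snocMin π = revCompl (consMax (revCompl π)) := by
  funext i
  induction i using Fin.lastCases with
  | last => simp [snocMin, revCompl, consMax]
  | cast i => simp [snocMin, revCompl, consMax, Fin.rev_castSucc]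

theorem tau_snocMin_succ (π : Fin n → Fin n) (m : ℕ) :
    tau (snocMin π) (m + 1) = tau π (m + 1) + tau π m := by
  rw [snocMin_eq_revCompl, tau_revCompl, tau_consMax_succ, tau_revCompl, tau_revCompl]

def directSum {p : ℕ} (π : Fin n → Fin n) (ρ : Fin p → Fin p) : Fin (n + p) → Fin (n + p) :=
  Fin.append (Fin.castAdd p ∘ π) (Fin.natAdd n ∘ ρ)

section DirectSum

variable {p : ℕ} (π : Fin n → Fin n) (ρ : Fin p → Fin p)

theorem directSum_castAdd_lt_castAdd_iff (i j : Fin n) :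
    directSum π ρ (Fin.castAdd p i) < directSum π ρ (Fin.castAdd p j) ↔ π i < π j := by
  simpa [directSum] using (Fin.strictMono_castAdd p).lt_iff_lt

theorem directSum_natAdd_lt_natAdd_iff (i j : Fin p) :
    directSum π ρ (Fin.natAdd n i) < directSum π ρ (Fin.natAdd n j) ↔ ρ i < ρ j := by
  simp [directSum]

theorem val_directSum_lt_iff (j : Fin (n + p)) : (directSum π ρ j : ℕ) < n ↔ (j : ℕ) < n := by
  induction j using Fin.addCases with
  | left i => simp [directSum]
  | right i => simp [directSum]

theorem tau_directSum_succ (m : ℕ) :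
    tau (directSum π ρ) (m + 1) = tau π (m + 1) + tau ρ (m + 1) := by
  let left : DecSeq π (m + 1) → DecSeq (directSum π ρ) (m + 1) :=
    DecSeq.map (Fin.strictMono_castAdd p) (directSum_castAdd_lt_castAdd_iff π ρ)
  let right : DecSeq ρ (m + 1) → DecSeq (directSum π ρ) (m + 1) :=
    DecSeq.map (Fin.strictMono_natAdd n) (directSum_natAdd_lt_natAdd_iff π ρ)
  -- A decreasing subsequence cannot climb from the lower block to the upper one.
  rw [tau_eq_card, tau_eq_card, tau_eq_card, ← Nat.card_sum]
  refine (Nat.card_eq_of_bijective (Sum.elim left right) ⟨?_, fun g => ?_⟩).symm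
  · refine (DecSeq.map_injective _ _).sumElim (DecSeq.map_injective _ _) fun _ _ h => ?_
    have h0 := congrArg (fun g => (g.1 0 : ℕ)) h
    simp only [right, DecSeq.map, Function.comp_apply, Fin.val_castAdd, Fin.val_natAdd] at h0
    omega
  by_cases h0 : (g.1 0 : ℕ) < n
  · have hlt (i : Fin (m + 1)) : (g.1 i : ℕ) < n := by
      rw [← val_directSum_lt_iff π ρ] at h0 ⊢
      exact lt_of_le_of_lt (g.2.2.antitone (Fin.zero_le i)) h0
    obtain ⟨f, hf⟩ := DecSeq.exists_map_eq (Fin.strictMono_castAdd p)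
      (directSum_castAdd_lt_castAdd_iff π ρ) g fun i => ⟨_, Fin.castAdd_castLT p _ (hlt i)⟩
    exact ⟨Sum.inl f, hf⟩
  · have hge (i : Fin (m + 1)) : n ≤ (g.1 i : ℕ) :=
      (not_lt.mp h0).trans (g.2.1.monotone (Fin.zero_le i))
    obtain ⟨f, hf⟩ := DecSeq.exists_map_eq (Fin.strictMono_natAdd n)
      (directSum_natAdd_lt_natAdd_iff π ρ) g fun i => ⟨_, Fin.natAdd_subNat_cast (hge i)⟩
    exact ⟨Sum.inr f, hf⟩

end DirectSum

/-- `τ_k` for an integer `k`, with `τ_0 = 1` (unlike `tauZ`, which sets `τ_0 = 0`). -/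
noncomputable def tauExt (π : Fin n → Fin n) (k : ℤ) : ℕ :=
  if k < 0 then 0 else tau π k.toNat

theorem tauExt_natCast (π : Fin n → Fin n) (m : ℕ) : tauExt π m = tau π m := by
  simp [tauExt]

theorem tauExt_of_neg (π : Fin n → Fin n) {k : ℤ} (hk : k < 0) : tauExt π k = 0 := by
  simp [tauExt, hk]

theorem tauExt_eq_tauZ_add_chooseZ (π : Fin n → Fin n) (k : ℤ) :
    tauExt π k = tauZ π k + chooseZ 0 k := by
  rcases lt_trichotomy k 0 with hk | rfl | hk
  · simp [tauExt, tauZ, chooseZ, hk, hk.le]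
  · simp [tauExt, tauZ, chooseZ, tau_zero]
  · simp [tauExt, tauZ, chooseZ, hk.not_gt, hk.not_ge, Nat.choose_eq_zero_of_lt, hk]

theorem chooseZ_succ_left (a : ℕ) (k : ℤ) :
    chooseZ (a + 1) k = chooseZ a k + chooseZ a (k - 1) := by
  rcases lt_trichotomy k 0 with hk | rfl | hk
  · simp [chooseZ, hk, show k - 1 < 0 by omega]
  · simp [chooseZ]
  · obtain ⟨m, rfl⟩ : ∃ m : ℕ, k = m + 1 := ⟨(k - 1).toNat, by omega⟩
    simp [chooseZ, Nat.choose_succ_succ', add_comm, show ¬ (m : ℤ) + 1 < 0 by omega,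
      show ¬ (m : ℤ) < 0 by omega]

theorem tauExt_eq_add_of_tau_succ {σ : Fin N → Fin N} {π : Fin n → Fin n}
    (h : ∀ m, tau σ (m + 1) = tau π (m + 1) + tau π m) (k : ℤ) :
    tauExt σ k = tauExt π k + tauExt π (k - 1) := by
  rcases lt_trichotomy k 0 with hk | rfl | hk
  · simp [tauExt_of_neg, hk, show k - 1 < 0 by omega]
  · simp [tauExt, tau_zero]
  · obtain ⟨m, rfl⟩ : ∃ m : ℕ, k = m + 1 := ⟨(k - 1).toNat, by omega⟩
    rw [add_sub_cancel_right, ← Nat.cast_succ, tauExt_natCast, tauExt_natCast, tauExt_natCast, h]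

theorem tauExt_directSum {p : ℕ} (π : Fin n → Fin n) (ρ : Fin p → Fin p) {k : ℤ} (hk : k ≠ 0) :
    tauExt (directSum π ρ) k = tauExt π k + tauExt ρ k := by
  rcases hk.lt_or_gt with hk | hk
  · simp [tauExt_of_neg, hk]
  · obtain ⟨m, rfl⟩ : ∃ m : ℕ, k = m + 1 := ⟨(k - 1).toNat, by omega⟩
    rw [← Nat.cast_succ, tauExt_natCast, tauExt_natCast, tauExt_natCast, tau_directSum_succ]

theorem starFun_eq {a b : ℕ} (π₁ : Fin a → Fin a) (π₂ : Fin b → Fin b) :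
    starFun π₁ π₂ = Fin.cast (by omega) ∘ directSum (snocMin (consMax π₁)) π₂ ∘
      Fin.cast (show a + b + 2 = a + 1 + 1 + b by omega) := by
  funext i
  obtain ⟨j, rfl⟩ : ∃ j : Fin (a + 1 + 1 + b), Fin.cast (by omega) j = i :=
    ⟨Fin.cast (by omega) i, Fin.ext rfl⟩
  apply Fin.ext
  induction j using Fin.addCases with
  | right j =>
    simp only [starFun, directSum, Fin.val_cast, Fin.val_natAdd, Nat.add_eq_zero_iff, one_ne_zero,
      and_false, and_self, false_and, ↓reduceDIte, Nat.succ_add_sub_one, Fin.zero_eta,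
      add_tsub_cancel_left, Fin.eta, dif_neg (show ¬ a + 1 + 1 + (j : ℕ) = a + 1 by omega),
      dif_neg (show ¬ a + 1 + 1 + (j : ℕ) ≤ a by omega), Function.comp_apply, Fin.cast_cast,
      Fin.cast_eq_self, Fin.append_right]
    omega
  | left j =>
    induction j using Fin.lastCases with
    | last => simp [starFun, directSum, snocMin]
    | cast j =>
      induction j using Fin.cases with
      | zero => simp [starFun, directSum, snocMin, consMax]
      | succ j => simp [starFun, directSum, snocMin, consMax, -Fin.castSucc_succ]

theorem tauExt_starFun {a b : ℕ} (π₁ : Fin a → Fin a) (π₂ : Fin b → Fin b) {k : ℤ} (hk : k ≠ 0) :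
    tauExt (starFun π₁ π₂) k =
      tauExt π₁ k + 2 * tauExt π₁ (k - 1) + tauExt π₁ (k - 2) + tauExt π₂ k := by
  have hcast : tauExt (starFun π₁ π₂) k = tauExt (directSum (snocMin (consMax π₁)) π₂) k := by
    simp only [tauExt, starFun_eq, tau_cast]
  rw [hcast, tauExt_directSum _ _ hk, tauExt_eq_add_of_tau_succ (tau_snocMin_succ _),
    tauExt_eq_add_of_tau_succ (tau_consMax_succ _), tauExt_eq_add_of_tau_succ (tau_consMax_succ _),
    sub_sub, one_add_one_eq_two]
  ring

end Decreasing

theorem stmt1_general (k : ℤ) (a b : ℕ) (π₁ : Fin a → Fin a) (π₂ : Fin b → Fin b) :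
    tauZ (starFun π₁ π₂) k =
      chooseZ 0 (k - 1) + chooseZ 1 (k - 1) + tauZ π₁ (k - 2) +
        2 * tauZ π₁ (k - 1) + tauZ π₁ k + tauZ π₂ k := by
  rcases le_or_gt k 0 with hk | hk
  · simp [tauZ, chooseZ, hk, show k - 1 < 0 by omega, show k - 1 ≤ 0 by omega,
      show k - 2 ≤ 0 by omega]
  have h := Decreasing.tauExt_starFun π₁ π₂ hk.ne'
  simp only [Decreasing.tauExt_eq_tauZ_add_chooseZ] at h
  have hk0 : chooseZ 0 k = 0 := by simp [chooseZ, hk.not_gt, Nat.choose_eq_zero_of_lt, hk]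
  rw [Decreasing.chooseZ_succ_left, sub_sub, one_add_one_eq_two]
  omega

/-- for all integers `k` and `π₁ ∈ I_a(3412)`, `π₂ ∈ I_b(3412)`,
`τ_k(π₁ * π₂) = C(0,k-1) + C(1,k-1) + τ_{k-2}(π₁) + 2·τ_{k-1}(π₁) + τ_k(π₁) + τ_k(π₂)`. -/
theorem stmt1 (k : ℤ) (a b : ℕ) (π₁ : Fin a → Fin a) (π₂ : Fin b → Fin b)
    (h₁inv : Function.Involutive π₁) (h₁av : Avoids π₁ pat3412)
    (h₂inv : Function.Involutive π₂) (h₂av : Avoids π₂ pat3412) :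
    tauZ (starFun π₁ π₂) k =
      chooseZ 0 (k - 1) + chooseZ 1 (k - 1) + tauZ π₁ (k - 2) +
        2 * tauZ π₁ (k - 1) + tauZ π₁ k + tauZ π₂ k :=
  stmt1_general k a b π₁ π₂
end

section
/- For every involution π ∈ I_n(3412), the number of left-to-right maxima of π equals the number of right-to-left minima of π, and both equal Σ_{k=1}^{n} (−1)^{k−1} τ_k(π). -/
open Finset

section Aux

variable {n : ℕ}

/-- Left-to-right maximum. -/
def IsLR (π : Fin n → Fin n) (i : Fin n) : Prop := ∀ j, j < i → π j < π i

/-- A set of positions forming a decreasing subsequence. -/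
def DecSet (π : Fin n → Fin n) (s : Finset (Fin n)) : Prop :=
  ∀ i ∈ s, ∀ j ∈ s, i < j → π j < π i

instance {π : Fin n → Fin n} : DecidablePred (IsLR π) := fun i => by
  unfold IsLR; infer_instance

instance {π : Fin n → Fin n} : DecidablePred (DecSet π) := fun s => by
  unfold DecSet; infer_instance

lemma contains_of_quad {π : Fin n → Fin n} {p1 p2 p3 p4 : Fin n}
    (h12 : p1 < p2) (h23 : p2 < p3) (h34 : p3 < p4)
    (v34 : π p3 < π p4) (v41 : π p4 < π p1) (v12 : π p1 < π p2) :
    Contains π pat3412 := by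
  have v31 : π p3 < π p1 := v34.trans v41
  have v42 : π p4 < π p2 := v41.trans v12
  have v32 : π p3 < π p2 := v31.trans v12
  refine ⟨![p1, p2, p3, p4], ?_, ?_⟩
  · intro a b hab
    fin_cases a <;> fin_cases b <;>
      first
        | exact absurd hab (by decide)
        | exact h12 | exact h23 | exact h34
        | exact h12.trans h23 | exact h23.trans h34 | exact (h12.trans h23).trans h34
  · intro a b
    fin_cases a <;> fin_cases b <;>
      refine ⟨fun h => ?_, fun h => ?_⟩ <;>
      first
        | exact absurd h (by decide)
        | exact v34 | exact v41 | exact v12 | exact v31 | exact v42 | exact v32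
        | exact absurd h (lt_irrefl _)
        | exact absurd h (asymm (by first
            | exact v34 | exact v41 | exact v12 | exact v31 | exact v42 | exact v32))
        | decide

/-- The key structural lemma: in a `3412`-avoiding involution, if `t` is a left-to-right
maximum then no position after `t` of value above `π t` may be followed by a position of
value below `π t`. -/
lemma lemL {π : Fin n → Fin n} (hinv : Function.Involutive π) (hav : Avoids π pat3412)
    {t j k : Fin n} (hLR : IsLR π t) (htj : t < j) (hjk : j < k)
    (hj : π t < π j) (hk : π k < π t) : False := by
  rcases lt_trichotomy j (π t) with hju | hju | hju
  · exact hav (contains_of_quad htj hju hj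
      (by rw [hinv, hinv]; exact htj) (by rw [hinv]; exact hju) hj)
  · have h1 : t < π t := hju ▸ htj
    have h2 : π t < t := by
      have : π j = t := by rw [hju, hinv]
      exact this ▸ hj
    exact absurd (h1.trans h2) (lt_irrefl t)
  · rcases lt_trichotomy (π k) t with hbt | hbt | hbt
    · have h1 : k < π t := by have := hLR (π k) hbt; rwa [hinv] at this
      exact absurd (h1.trans (hju.trans hjk)) (lt_irrefl k)
    · have h1 : k = π t := by rw [← hinv k, hbt]
      exact absurd (h1 ▸ (hju.trans hjk)) (lt_irrefl _)
    · exact hav (contains_of_quad hbt hk (hju.trans hjk)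
        (by rw [hinv]; exact hbt) hk (by rw [hinv]; exact hju.trans hjk))

/-- The canonical left-to-right maximum below `m` with largest value. -/
noncomputable def cand (π : Fin n → Fin n) (m : Fin n) : Fin n :=
  if h : ((univ.filter (fun j => j < m)).image π).Nonempty
  then π (((univ.filter (fun j => j < m)).image π).max' h) else m

/-- The toggle map of the sign-reversing involution. -/
noncomputable def gmap (π : Fin n → Fin n) (s : Finset (Fin n)) : Finset (Fin n) :=
  if h : s.Nonempty then
    if IsLR π (s.min' h) then s.erase (s.min' h)
    else insert (cand π (s.min' h)) s
  else s

lemma cand_spec {π : Fin n → Fin n} (hinv : Function.Involutive π) {m : Fin n}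
    (hm : ¬ IsLR π m) :
    cand π m < m ∧ π m < π (cand π m) ∧ (∀ j, j < m → π j ≤ π (cand π m)) ∧
      IsLR π (cand π m) := by
  obtain ⟨j0, hj0m, hj0⟩ : ∃ j, j < m ∧ π m < π j := by
    simp only [IsLR, not_forall] at hm
    obtain ⟨j, hjm, hj⟩ := hm
    exact ⟨j, hjm, lt_of_le_of_ne (not_lt.1 hj)
      (fun h => hjm.ne' (hinv.injective h))⟩
  set T := ((univ.filter (fun j => j < m)).image π) with hT
  have hne : T.Nonempty := ⟨π j0, mem_image.2 ⟨j0, by simp [hj0m], rfl⟩⟩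
  have hcand : cand π m = π (T.max' hne) := by
    rw [cand, dif_pos]
  have hπcand : π (cand π m) = T.max' hne := by rw [hcand, hinv]
  obtain ⟨c0, hc0mem, hc0⟩ := mem_image.1 (T.max'_mem hne)
  have hc0m : c0 < m := by simpa using mem_filter.1 hc0mem
  have hcand' : cand π m = c0 := by rw [hcand, ← hc0, hinv]
  have hmax : ∀ j, j < m → π j ≤ π (cand π m) := by
    intro j hj
    rw [hπcand]
    exact T.le_max' _ (mem_image.2 ⟨j, by simp [hj], rfl⟩)
  refine ⟨hcand' ▸ hc0m, lt_of_lt_of_le hj0 (hmax j0 hj0m), hmax, ?_⟩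
  intro j hj
  have hjm : j < m := (hcand' ▸ hj).trans hc0m
  exact lt_of_le_of_ne (hmax j hjm) (fun h => hj.ne (hinv.injective h))

lemma gmap_insert {π : Fin n → Fin n} (hinv : Function.Involutive π)
    {s : Finset (Fin n)} (hs : s.Nonempty) (hdec : DecSet π s)
    (hm : ¬ IsLR π (s.min' hs)) :
    gmap π s = insert (cand π (s.min' hs)) s ∧
    cand π (s.min' hs) ∉ s ∧
    DecSet π (insert (cand π (s.min' hs)) s) ∧
    (insert (cand π (s.min' hs)) s).card = s.card + 1 ∧
    gmap π (insert (cand π (s.min' hs)) s) = s := by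
  set m := s.min' hs with hmdef
  obtain ⟨hcm, hπm, hmax, hLRc⟩ := cand_spec hinv hm
  set c := cand π m with hcdef
  have hcnot : c ∉ s := fun h => absurd (s.min'_le c h) (not_le.2 hcm)
  have hdec' : DecSet π (insert c s) := by
    intro i hi j hj hij
    rcases mem_insert.1 hi with rfl | hi
    · rcases mem_insert.1 hj with rfl | hj
      · exact absurd hij (lt_irrefl _)
      · have hmj : m ≤ j := s.min'_le j hj
        rcases eq_or_lt_of_le hmj with rfl | hmj
        · exact hπm
        · exact (hdec m (s.min'_mem hs) j hj hmj).trans hπm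
    · rcases mem_insert.1 hj with rfl | hj
      · exact absurd (hij.trans hcm) (not_lt.2 (s.min'_le i hi))
      · exact hdec i hi j hj hij
  have hcard : (insert c s).card = s.card + 1 := card_insert_of_notMem hcnot
  have hg : gmap π s = insert c s := by
    rw [gmap, dif_pos hs, if_neg hm]
  have hne' : (insert c s).Nonempty := insert_nonempty c s
  have hmin' : (insert c s).min' hne' = c := by
    refine le_antisymm (min'_le _ _ (mem_insert_self c s)) (le_min' _ _ _ ?_)
    intro y hy
    rcases mem_insert.1 hy with rfl | hy
    · exact le_rfl
    · exact hcm.le.trans (s.min'_le y hy)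
  have hLR' : IsLR π ((insert c s).min' hne') := by rw [hmin']; exact hLRc
  have hg2 : gmap π (insert c s) = s := by
    rw [gmap, dif_pos hne', if_pos hLR', hmin', erase_insert hcnot]
  exact ⟨hg, hcnot, hdec', hcard, hg2⟩

lemma gmap_erase {π : Fin n → Fin n} (hinv : Function.Involutive π)
    (hav : Avoids π pat3412)
    {s : Finset (Fin n)} (hs : s.Nonempty) (hdec : DecSet π s)
    (hm : IsLR π (s.min' hs)) (hcard2 : 2 ≤ s.card) :
    gmap π s = s.erase (s.min' hs) ∧
    (s.erase (s.min' hs)).Nonempty ∧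
    DecSet π (s.erase (s.min' hs)) ∧
    (s.erase (s.min' hs)).card = s.card - 1 ∧
    (∀ h2 : (s.erase (s.min' hs)).Nonempty, ¬ IsLR π ((s.erase (s.min' hs)).min' h2)) ∧
    gmap π (s.erase (s.min' hs)) = s := by
  set m := s.min' hs with hmdef
  have hms : m ∈ s := s.min'_mem hs
  have hcarde : (s.erase m).card = s.card - 1 := card_erase_of_mem hms
  have hne2 : (s.erase m).Nonempty := by
    rw [← card_pos, hcarde]; omega
  set m' := (s.erase m).min' hne2 with hm'def
  have hm'e : m' ∈ s.erase m := min'_mem _ hne2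
  have hm's : m' ∈ s := mem_of_mem_erase hm'e
  have hm'ne : m' ≠ m := ne_of_mem_erase hm'e
  have hmm' : m < m' := lt_of_le_of_ne (s.min'_le m' hm's) (hm'ne.symm)
  have hπ : π m' < π m := hdec m hms m' hm's hmm'
  have hnotLR : ¬ IsLR π m' := fun h => absurd (h m hmm') (asymm hπ)
  have hdece : DecSet π (s.erase m) := fun i hi j hj hij =>
    hdec i (mem_of_mem_erase hi) j (mem_of_mem_erase hj) hij
  have hg : gmap π s = s.erase m := by rw [gmap, dif_pos hs, if_pos hm]
  obtain ⟨hc'm', hπm', hmax', hLRc'⟩ := cand_spec hinv hnotLR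
  set c' := cand π m' with hc'def
  have hle : π c' ≤ π m := by
    by_contra hcon
    have hlt : π m < π c' := lt_of_not_ge hcon
    rcases lt_trichotomy c' m with h | h | h
    · exact absurd (hm c' h) (asymm hlt)
    · exact absurd (h ▸ hlt) (lt_irrefl _)
    · exact lemL hinv hav hm h hc'm' hlt hπ
  have hge : π m ≤ π c' := hmax' m hmm'
  have hc'm : c' = m := hinv.injective (le_antisymm hle hge)
  have hg2 : gmap π (s.erase m) = s := by
    rw [gmap, dif_pos hne2, if_neg (by rw [← hm'def]; exact hnotLR)]
    rw [← hm'def, ← hc'def, hc'm, insert_erase hms]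
  refine ⟨hg, hne2, hdece, hcarde, ?_, hg2⟩
  intro h2
  rw [show (s.erase m).min' h2 = m' from rfl]
  exact hnotLR

/-- Combined toggle lemma: all properties needed for the sign-reversing involution. -/
lemma toggle {π : Fin n → Fin n} (hinv : Function.Involutive π)
    (hav : Avoids π pat3412)
    {s : Finset (Fin n)} (hs : s.Nonempty) (hdec : DecSet π s)
    (hns : ¬ ∃ i, s = {i} ∧ IsLR π i) :
    (gmap π s).Nonempty ∧ DecSet π (gmap π s) ∧
    (¬ ∃ i, gmap π s = {i} ∧ IsLR π i) ∧
    gmap π (gmap π s) = s ∧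
    ((gmap π s).card = s.card + 1 ∨ (2 ≤ s.card ∧ (gmap π s).card = s.card - 1)) := by
  by_cases hm : IsLR π (s.min' hs)
  · have hcard2 : 2 ≤ s.card := by
      by_contra h
      have h1 : s.card = 1 := le_antisymm (by omega) (card_pos.2 hs)
      obtain ⟨a, ha⟩ := card_eq_one.1 h1
      refine hns ⟨a, ha, ?_⟩
      have hma : s.min' hs = a := mem_singleton.1 (by rw [← ha]; exact s.min'_mem hs)
      rwa [hma] at hm
    obtain ⟨hg, hne2, hdece, hcarde, hnl, hg2⟩ := gmap_erase hinv hav hs hdec hm hcard2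
    rw [hg]
    refine ⟨hne2, hdece, ?_, by rw [hg2], Or.inr ⟨hcard2, hcarde⟩⟩
    rintro ⟨i, hi, hLRi⟩
    refine hnl hne2 ?_
    have hmi : (s.erase (s.min' hs)).min' hne2 = i :=
      mem_singleton.1 (by rw [← hi]; exact min'_mem _ _)
    rwa [hmi]
  · obtain ⟨hg, hcnot, hdec', hcard, hg2⟩ := gmap_insert hinv hs hdec hm
    rw [hg]
    refine ⟨insert_nonempty _ _, hdec', ?_, by rw [hg2], Or.inl hcard⟩
    rintro ⟨i, hi, -⟩
    have h1 : (insert (cand π (s.min' hs)) s).card = 1 := by rw [hi]; simp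
    rw [hcard] at h1
    have := card_pos.2 hs
    omega

lemma lr_to_rl {π : Fin n → Fin n} (hinv : Function.Involutive π) {i : Fin n}
    (h : ∀ j, j < i → π j < π i) : ∀ j, π i < j → π (π i) < π j := by
  intro j hj
  rw [hinv]
  by_contra hcon
  push_neg at hcon
  rcases eq_or_lt_of_le hcon with heq | hlt
  · have hji : j = π i := by rw [← hinv j, heq]
    exact absurd (hji ▸ hj) (lt_irrefl _)
  · have h2 := h (π j) hlt
    rw [hinv] at h2
    exact absurd (h2.trans hj) (lt_irrefl _)

lemma rl_to_lr {π : Fin n → Fin n} (hinv : Function.Involutive π) {i : Fin n}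
    (h : ∀ j, i < j → π i < π j) : ∀ j, j < π i → π j < π (π i) := by
  intro j hj
  rw [hinv]
  by_contra hcon
  push_neg at hcon
  rcases eq_or_lt_of_le hcon with heq | hlt
  · have hji : j = π i := by rw [← hinv j, ← heq]
    exact absurd (hji ▸ hj) (lt_irrefl _)
  · have h2 := h (π j) hlt
    rw [hinv] at h2
    exact absurd (hj.trans h2) (lt_irrefl _)

/-- Counting decreasing subsequences by their underlying sets. -/
lemma tau_eq (π : Fin n → Fin n) (k : ℕ) :
    tau π k = (univ.filter
      (fun s : Finset (Fin n) => s.card = k ∧ DecSet π s)).card := by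
  rw [tau, ← Fintype.card_subtype, ← Nat.card_eq_fintype_card]
  refine Nat.card_congr ?_
  refine
    { toFun := fun x => ⟨univ.image x.1, ?_, ?_⟩
      invFun := fun s => ⟨s.1.orderEmbOfFin s.2.1, (s.1.orderEmbOfFin s.2.1).strictMono, ?_⟩
      left_inv := ?_
      right_inv := ?_ }
  · rw [card_image_of_injective _ x.2.1.injective, card_univ, Fintype.card_fin]
  · intro i hi j hj hij
    obtain ⟨a, -, rfl⟩ := mem_image.1 hi
    obtain ⟨b, -, rfl⟩ := mem_image.1 hj
    exact x.2.2 a b (x.2.1.lt_iff_lt.1 hij)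
  · intro a b hab
    exact s.2.2 _ (orderEmbOfFin_mem s.1 s.2.1 a) _ (orderEmbOfFin_mem s.1 s.2.1 b)
      ((s.1.orderEmbOfFin s.2.1).strictMono hab)
  · rintro ⟨f, hf, hd⟩
    refine Subtype.ext ?_
    exact (orderEmbOfFin_unique _ (fun x => mem_image_of_mem f (mem_univ x)) hf).symm
  · rintro ⟨s, hk, hdec⟩
    refine Subtype.ext ?_
    ext x
    simp only [mem_image, mem_univ, true_and]
    constructor
    · rintro ⟨a, rfl⟩
      exact orderEmbOfFin_mem s hk a
    · intro hx
      have hr := range_orderEmbOfFin s hk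
      have hx' : x ∈ Set.range (s.orderEmbOfFin hk) := by rw [hr]; exact hx
      obtain ⟨a, ha⟩ := hx'
      exact ⟨a, ha⟩

/-- The alternating-sum identity via the sign-reversing involution. -/
lemma sum_eq_card_LR (π : Fin n → Fin n) (hinv : Function.Involutive π)
    (hav : Avoids π pat3412) :
    ((univ.filter (IsLR π)).card : ℤ) =
      ∑ k ∈ Finset.Icc 1 n, (-1 : ℤ) ^ (k - 1) * (tau π k : ℤ) := by
  classical
  set D : Finset (Finset (Fin n)) :=
    univ.filter (fun s => s.Nonempty ∧ DecSet π s) with hD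
  have key : ∑ s ∈ D, (-1 : ℤ) ^ (s.card - 1) = ((univ.filter (IsLR π)).card : ℤ) := by
    rw [← sum_filter_add_sum_filter_not D (fun s => ∃ i, s = {i} ∧ IsLR π i)]
    have h1 : ∑ s ∈ D.filter (fun s => ∃ i, s = {i} ∧ IsLR π i),
        (-1 : ℤ) ^ (s.card - 1) = ((univ.filter (IsLR π)).card : ℤ) := by
      rw [sum_congr rfl (fun s hs => ?_), sum_const, nsmul_eq_mul, mul_one]
      · congr 1
        refine (card_bij (fun (a : Fin n) _ => ({a} : Finset (Fin n))) ?_ ?_ ?_).symm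
        · intro a ha
          simp only [hD, mem_filter, mem_univ, true_and] at ha ⊢
          exact ⟨⟨singleton_nonempty a, fun i hi j hj hij => by
            simp only [mem_singleton] at hi hj
            subst hi; subst hj; exact absurd hij (lt_irrefl _)⟩, a, rfl, ha⟩
        · intro a ha b hb h
          exact singleton_injective h
        · intro s hs
          simp only [hD, mem_filter, mem_univ, true_and] at hs
          obtain ⟨-, i, rfl, hLRi⟩ := hs
          exact ⟨i, by simpa using hLRi, rfl⟩
      · simp only [mem_filter] at hs
        obtain ⟨-, i, rfl, -⟩ := hs
        simp
    have h2 : ∑ s ∈ D.filter (fun s => ¬ ∃ i, s = {i} ∧ IsLR π i),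
        (-1 : ℤ) ^ (s.card - 1) = 0 := by
      refine sum_involution (fun s _ => gmap π s) ?_ ?_ ?_ ?_
      · intro s hs
        simp only [hD, mem_filter, mem_univ, true_and] at hs
        obtain ⟨⟨hne, hdec⟩, hns⟩ := hs
        obtain ⟨-, -, -, -, hcards⟩ := toggle hinv hav hne hdec hns
        have hpos : 1 ≤ s.card := card_pos.2 hne
        rcases hcards with h | ⟨h2, h⟩
        · rw [h]
          obtain ⟨d, hd⟩ : ∃ d, s.card = d + 1 := ⟨s.card - 1, by omega⟩
          rw [hd]
          simp [pow_succ]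
        · rw [h]
          obtain ⟨d, hd⟩ : ∃ d, s.card = d + 2 := ⟨s.card - 2, by omega⟩
          rw [hd]
          have e1 : d + 2 - 1 - 1 = d := by omega
          have e2 : d + 2 - 1 = d + 1 := by omega
          rw [e1, e2]
          simp [pow_succ]
      · intro s hs hne0 heq
        simp only [hD, mem_filter, mem_univ, true_and] at hs
        obtain ⟨⟨hne, hdec⟩, hns⟩ := hs
        obtain ⟨-, -, -, -, hcards⟩ := toggle hinv hav hne hdec hns
        have hpos : 1 ≤ s.card := card_pos.2 hne
        have heq' : gmap π s = s := heq
        rw [heq'] at hcards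
        rcases hcards with h | ⟨h2, h⟩ <;> omega
      · intro s hs
        simp only [hD, mem_filter, mem_univ, true_and] at hs ⊢
        obtain ⟨⟨hne, hdec⟩, hns⟩ := hs
        obtain ⟨h1', h2', h3', -, -⟩ := toggle hinv hav hne hdec hns
        exact ⟨⟨h1', h2'⟩, h3'⟩
      · intro s hs
        simp only [hD, mem_filter, mem_univ, true_and] at hs
        obtain ⟨⟨hne, hdec⟩, hns⟩ := hs
        obtain ⟨-, -, -, h4', -⟩ := toggle hinv hav hne hdec hns
        exact h4'
    rw [h1, h2, add_zero]
  rw [← key]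
  have hmap : ∀ s ∈ D, s.card ∈ Finset.Icc 1 n := by
    intro s hs
    simp only [hD, mem_filter, mem_univ, true_and] at hs
    refine Finset.mem_Icc.2 ⟨card_pos.2 hs.1, ?_⟩
    simpa using card_le_univ s
  rw [← sum_fiberwise_of_maps_to hmap (fun s => (-1 : ℤ) ^ (s.card - 1))]
  refine sum_congr rfl ?_
  intro k hk
  rw [Finset.mem_Icc] at hk
  have hfil : D.filter (fun s => s.card = k) =
      univ.filter (fun s : Finset (Fin n) => s.card = k ∧ DecSet π s) := by
    ext s
    simp only [hD, mem_filter, mem_univ, true_and]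
    constructor
    · rintro ⟨⟨-, hdec⟩, hcard⟩
      exact ⟨hcard, hdec⟩
    · rintro ⟨hcard, hdec⟩
      exact ⟨⟨card_pos.1 (by omega), hdec⟩, hcard⟩
  calc ∑ s ∈ D.filter (fun s => s.card = k), (-1 : ℤ) ^ (s.card - 1)
      = ∑ s ∈ D.filter (fun s => s.card = k), (-1 : ℤ) ^ (k - 1) := by
        refine sum_congr rfl fun s hs => ?_
        rw [(mem_filter.1 hs).2]
    _ = (-1 : ℤ) ^ (k - 1) * (tau π k : ℤ) := by
        rw [sum_const, nsmul_eq_mul, mul_comm, tau_eq π k, hfil]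

end Aux

/-- for every `π ∈ I_n(3412)`, the number of left-to-right maxima equals the
number of right-to-left minima, and both equal `Σ_{k=1}^n (-1)^{k-1} τ_k(π)`. -/
theorem stmt4 (n : ℕ) (π : Fin n → Fin n)
    (hinv : Function.Involutive π) (hav : Avoids π pat3412) :
    Nat.card {i : Fin n // ∀ j : Fin n, j < i → π j < π i} =
      Nat.card {i : Fin n // ∀ j : Fin n, i < j → π i < π j} ∧
    (Nat.card {i : Fin n // ∀ j : Fin n, j < i → π j < π i} : ℤ) =
      ∑ k ∈ Finset.Icc 1 n, (-1 : ℤ) ^ (k - 1) * (tau π k : ℤ) := by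
  constructor
  · refine Nat.card_congr ?_
    refine
      { toFun := fun x => ⟨π x.1, lr_to_rl hinv x.2⟩
        invFun := fun x => ⟨π x.1, rl_to_lr hinv x.2⟩
        left_inv := fun x => Subtype.ext (hinv x.1)
        right_inv := fun x => Subtype.ext (hinv x.1) }
  · have hcard : Nat.card {i : Fin n // ∀ j : Fin n, j < i → π j < π i} =
        (univ.filter (IsLR π)).card := by
      rw [Nat.card_eq_fintype_card]
      exact Fintype.card_subtype _
    rw [hcard]
    exact sum_eq_card_LR π hinv hav
end

section
/- For every involution π ∈ I_n(3412), the number of fixed points of π (indices i with π(i) = i) equals Σ_{k=1}^{n} (−2)^{k−1} τ_k(π). -/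
section Aux

variable {n : ℕ} (π : Fin n → Fin n)

def IsDec (T : Finset (Fin n)) : Prop := ∀ i ∈ T, ∀ j ∈ T, i < j → π j < π i

instance : DecidablePred (IsDec π) := fun _ => by unfold IsDec; infer_instance

def chains (S : Finset (Fin n)) : Finset (Finset (Fin n)) :=
  S.powerset.filter (IsDec π)

noncomputable def Zsum (S : Finset (Fin n)) : ℤ := ∑ T ∈ chains π S, (-2) ^ T.card

lemma mem_chains {S T : Finset (Fin n)} :
    T ∈ chains π S ↔ T ⊆ S ∧ IsDec π T := by
  simp [chains, Finset.mem_filter, Finset.mem_powerset]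

lemma isDec_empty : IsDec π (∅ : Finset (Fin n)) :=
  fun i hi => absurd hi (Finset.notMem_empty i)

lemma isDec_subset {T T' : Finset (Fin n)} (h : T' ⊆ T) (hT : IsDec π T) : IsDec π T' :=
  fun i hi j hj hij => hT i (h hi) j (h hj) hij

lemma chains_empty : chains π (∅ : Finset (Fin n)) = {∅} := by
  ext T
  simp only [mem_chains, Finset.subset_empty, Finset.mem_singleton]
  constructor
  · rintro ⟨rfl, -⟩; rfl
  · rintro rfl; exact ⟨rfl, isDec_empty π⟩

lemma Zsum_empty : Zsum π (∅ : Finset (Fin n)) = 1 := by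
  rw [Zsum, chains_empty]; simp

lemma Zsum_union {A B : Finset (Fin n)} (hd : Disjoint A B)
    (h : ∀ a ∈ A, ∀ b ∈ B, ¬ (a < b ∧ π b < π a) ∧ ¬ (b < a ∧ π a < π b)) :
    Zsum π (A ∪ B) = Zsum π A + Zsum π B - 1 := by
  have hU : chains π (A ∪ B) = chains π A ∪ chains π B := by
    ext T
    simp only [mem_chains, Finset.mem_union]
    constructor
    · rintro ⟨hsub, hdec⟩
      by_cases hTA : T ⊆ A
      · exact Or.inl ⟨hTA, hdec⟩
      · refine Or.inr ⟨fun x hx => ?_, hdec⟩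
        rcases Finset.mem_union.mp (hsub hx) with h1 | h1
        · exfalso
          obtain ⟨y, hyT, hyA⟩ := Finset.not_subset.mp hTA
          have hyB : y ∈ B := by
            rcases Finset.mem_union.mp (hsub hyT) with h2 | h2
            · exact absurd h2 hyA
            · exact h2
          rcases lt_trichotomy x y with hlt | heq | hlt
          · exact (h x h1 y hyB).1 ⟨hlt, hdec x hx y hyT hlt⟩
          · exact hyA (heq ▸ h1)
          · exact (h x h1 y hyB).2 ⟨hlt, hdec y hyT x hx hlt⟩
        · exact h1
    · rintro (⟨hsub, hdec⟩ | ⟨hsub, hdec⟩)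
      · exact ⟨hsub.trans Finset.subset_union_left, hdec⟩
      · exact ⟨hsub.trans Finset.subset_union_right, hdec⟩
  have hI : chains π A ∩ chains π B = {∅} := by
    ext T
    simp only [Finset.mem_inter, mem_chains, Finset.mem_singleton]
    constructor
    · rintro ⟨⟨h1, -⟩, ⟨h2, -⟩⟩
      have hsub : T ⊆ A ∩ B := Finset.subset_inter h1 h2
      rw [Finset.disjoint_iff_inter_eq_empty.mp hd] at hsub
      exact Finset.subset_empty.mp hsub
    · rintro rfl
      exact ⟨⟨Finset.empty_subset _, isDec_empty π⟩, ⟨Finset.empty_subset _, isDec_empty π⟩⟩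
  have hsum := Finset.sum_union_inter (s₁ := chains π A) (s₂ := chains π B)
    (f := fun T => ((-2 : ℤ)) ^ T.card)
  rw [hI] at hsum
  simp only [Finset.sum_singleton, Finset.card_empty, pow_zero] at hsum
  unfold Zsum
  rw [hU]
  linarith [hsum]

lemma Zsum_insert {S : Finset (Fin n)} {x : Fin n} (hx : x ∉ S)
    (h : ∀ y ∈ S, (x < y → π y < π x) ∧ (y < x → π x < π y)) :
    Zsum π (insert x S) = - Zsum π S := by
  have key : chains π (insert x S) = chains π S ∪ (chains π S).image (insert x) := by
    ext T
    simp only [mem_chains, Finset.mem_union, Finset.mem_image]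
    constructor
    · rintro ⟨hsub, hdec⟩
      by_cases hxT : x ∈ T
      · refine Or.inr ⟨T.erase x, ⟨?_, isDec_subset π (Finset.erase_subset _ _) hdec⟩,
          Finset.insert_erase hxT⟩
        intro y hy
        rcases Finset.mem_insert.mp (hsub (Finset.mem_of_mem_erase hy)) with rfl | h2
        · exact absurd rfl (Finset.ne_of_mem_erase hy)
        · exact h2
      · refine Or.inl ⟨fun y hy => ?_, hdec⟩
        rcases Finset.mem_insert.mp (hsub hy) with rfl | h2
        · exact absurd hy hxT
        · exact h2
    · rintro (⟨hsub, hdec⟩ | ⟨T₀, ⟨hsub, hdec⟩, rfl⟩)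
      · exact ⟨hsub.trans (Finset.subset_insert _ _), hdec⟩
      · refine ⟨Finset.insert_subset_insert _ hsub, ?_⟩
        intro i hi j hj hij
        rcases Finset.mem_insert.mp hi with rfl | hi' <;>
          rcases Finset.mem_insert.mp hj with rfl | hj'
        · exact absurd hij (lt_irrefl _)
        · exact (h j (hsub hj')).1 hij
        · exact (h i (hsub hi')).2 hij
        · exact hdec i hi' j hj' hij
  have hdisj : Disjoint (chains π S) ((chains π S).image (insert x)) := by
    rw [Finset.disjoint_left]
    intro T hT hT'
    obtain ⟨T₀, -, rfl⟩ := Finset.mem_image.mp hT'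
    have : x ∈ S := (mem_chains π).mp hT |>.1 (Finset.mem_insert_self x T₀)
    exact hx this
  have hinj : ∀ T ∈ chains π S, ∀ T' ∈ chains π S, insert x T = insert x T' → T = T' := by
    intro T hT T' hT' hh
    have hx1 : x ∉ T := fun hc => hx (((mem_chains π).mp hT).1 hc)
    have hx2 : x ∉ T' := fun hc => hx (((mem_chains π).mp hT').1 hc)
    rw [← Finset.erase_insert hx1, ← Finset.erase_insert hx2, hh]
  unfold Zsum
  rw [key, Finset.sum_union hdisj, Finset.sum_image hinj]
  have : ∀ T ∈ chains π S, ((-2 : ℤ)) ^ (insert x T).card = (-2) * (-2) ^ T.card := by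
    intro T hT
    have hx1 : x ∉ T := fun hc => hx (((mem_chains π).mp hT).1 hc)
    rw [Finset.card_insert_of_notMem hx1, pow_succ, mul_comm]
  rw [Finset.sum_congr rfl this, ← Finset.mul_sum]
  ring


lemma main_lemma : ∀ S : Finset (Fin n),
    (∀ i ∈ S, π i ∈ S) → (∀ i ∈ S, π (π i) = i) →
    (∀ a ∈ S, ∀ b ∈ S, a < b → b < π a → ¬ π a < π b) →
    Zsum π S = 1 - 2 * ((S.filter (fun i => π i = i)).card : ℤ) := by
  intro S
  induction S using Finset.strongInduction with
  | _ S ih =>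
    intro hcl hinv hnc
    rcases S.eq_empty_or_nonempty with rfl | hne
    · simp [Zsum_empty]
    · set m := S.min' hne with hm_def
      have hmS : m ∈ S := S.min'_mem hne
      have hmin : ∀ x ∈ S, m ≤ x := fun x hx => S.min'_le x hx
      by_cases hfix : π m = m
      · -- m is a fixed point, split it off
        set B := S.erase m with hB
        have hBsub : B ⊂ S := Finset.erase_ssubset hmS
        have hSB : S = insert m B := (Finset.insert_erase hmS).symm
        have hmnB : m ∉ B := Finset.notMem_erase m S
        have hclB : ∀ i ∈ B, π i ∈ B := by
          intro i hi
          have hiS := Finset.mem_of_mem_erase hi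
          refine Finset.mem_erase.mpr ⟨?_, hcl i hiS⟩
          intro hpm
          exact (Finset.ne_of_mem_erase hi) (by rw [← hinv i hiS, hpm, hfix])
        have hZB := ih B hBsub hclB (fun i hi => hinv i (Finset.mem_of_mem_erase hi))
          (fun a ha b hb => hnc a (Finset.mem_of_mem_erase ha) b (Finset.mem_of_mem_erase hb))
        have hsing : ({m} : Finset (Fin n)) ∪ B = S := by
          rw [hSB, Finset.insert_eq]
        have hZ : Zsum π S = Zsum π {m} + Zsum π B - 1 := by
          rw [← hsing]
          apply Zsum_union
          · simpa using hmnB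
          · intro a ha b hb
            rw [Finset.mem_singleton] at ha
            subst ha
            have hbS := Finset.mem_of_mem_erase hb
            constructor
            · rintro ⟨h1, h2⟩
              rw [hfix] at h2
              exact absurd h2 (not_lt.mpr (hmin _ (hcl b hbS)))
            · rintro ⟨h1, -⟩
              exact absurd h1 (not_lt.mpr (hmin b hbS))
        have hZm : Zsum π ({m} : Finset (Fin n)) = -1 := by
          have h1 : ({m} : Finset (Fin n)) = insert m ∅ := rfl
          rw [h1, Zsum_insert π (Finset.notMem_empty m) (by simp), Zsum_empty]
        have hfp : (S.filter (fun i => π i = i)).card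
            = (B.filter (fun i => π i = i)).card + 1 := by
          rw [hSB, Finset.filter_insert, if_pos hfix, Finset.card_insert_of_notMem]
          intro hmem
          exact hmnB (Finset.mem_of_mem_filter _ hmem)
        rw [hZ, hZm, hZB, hfp]
        push_cast
        ring
      · -- m is matched to b = π m > m
        set b := π m with hb_def
        have hbS : b ∈ S := hcl m hmS
        have hmb : m < b := lt_of_le_of_ne (hmin b hbS) (fun e => hfix e.symm)
        have hπb : π b = m := hinv m hmS
        set A := S.filter (fun x => m < x ∧ x < b) with hA
        set B := S.filter (fun x => b < x) with hBd
        have hmA : m ∉ A := by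
          rw [hA, Finset.mem_filter]; rintro ⟨-, h1, -⟩; exact absurd h1 (lt_irrefl m)
        have hbA : b ∉ A := by
          rw [hA, Finset.mem_filter]; rintro ⟨-, -, h2⟩; exact absurd h2 (lt_irrefl b)
        have hmB : m ∉ B := by
          rw [hBd, Finset.mem_filter]; rintro ⟨-, h1⟩; exact absurd (h1.trans hmb) (lt_irrefl b)
        have hbB : b ∉ B := by
          rw [hBd, Finset.mem_filter]; rintro ⟨-, h1⟩; exact absurd h1 (lt_irrefl b)
        have hAS : A ⊆ S := Finset.filter_subset _ _
        have hBS : B ⊆ S := Finset.filter_subset _ _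
        -- closure of A under π
        have hclA : ∀ a ∈ A, π a ∈ A := by
          intro a ha
          rw [hA, Finset.mem_filter] at ha
          obtain ⟨haS, hma, hab⟩ := ha
          have hπaS : π a ∈ S := hcl a haS
          have h1 : π a ≠ m := by
            intro hh
            have : a = b := by rw [← hinv a haS, hh, ← hb_def]
            exact absurd (this ▸ hab) (lt_irrefl b)
          have h2 : π a ≠ b := by
            intro hh
            have : a = m := by rw [← hinv a haS, hh, hπb]
            exact absurd (this ▸ hma) (lt_irrefl m)
          have h3 : m < π a := lt_of_le_of_ne (hmin _ hπaS) (Ne.symm h1)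
          have h4 : π a < b := by
            rcases lt_trichotomy (π a) b with h | h | h
            · exact h
            · exact absurd h h2
            · exact absurd h (hb_def ▸ hnc m hmS a haS hma (hb_def ▸ hab))
          rw [hA, Finset.mem_filter]
          exact ⟨hπaS, h3, h4⟩
        -- closure of B under π
        have hclB : ∀ y ∈ B, π y ∈ B := by
          intro y hy
          rw [hBd, Finset.mem_filter] at hy
          obtain ⟨hyS, hby⟩ := hy
          have hπyS : π y ∈ S := hcl y hyS
          have h1 : π y ≠ m := by
            intro hh
            have : y = b := by rw [← hinv y hyS, hh, ← hb_def]
            exact absurd (this ▸ hby) (lt_irrefl b)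
          have h2 : π y ≠ b := by
            intro hh
            have : y = m := by rw [← hinv y hyS, hh, hπb]
            exact absurd ((this ▸ hby).trans hmb) (lt_irrefl b)
          have h3 : b < π y := by
            rcases lt_trichotomy b (π y) with h | h | h
            · exact h
            · exact absurd h.symm h2
            · exfalso
              have hπyA : π y ∈ A := by
                rw [hA, Finset.mem_filter]
                exact ⟨hπyS, lt_of_le_of_ne (hmin _ hπyS) (Ne.symm h1), h⟩
              have := hclA (π y) hπyA
              rw [hinv y hyS] at this
              rw [hA, Finset.mem_filter] at this
              exact absurd (this.2.2.trans hby) (lt_irrefl y)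
          rw [hBd, Finset.mem_filter]
          exact ⟨hπyS, h3⟩
        -- decomposition of S
        have hdecomp : S = insert m (insert b (A ∪ B)) := by
          ext x
          simp only [Finset.mem_insert, Finset.mem_union, hA, hBd, Finset.mem_filter]
          constructor
          · intro hxS
            rcases eq_or_lt_of_le (hmin x hxS) with h | h
            · exact Or.inl h.symm
            · rcases lt_trichotomy x b with h2 | h2 | h2
              · exact Or.inr (Or.inr (Or.inl ⟨hxS, h, h2⟩))
              · exact Or.inr (Or.inl h2)
              · exact Or.inr (Or.inr (Or.inr ⟨hxS, h2⟩))
          · rintro (rfl | rfl | ⟨h1, -⟩ | ⟨h1, -⟩)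
            · exact hmS
            · exact hbS
            · exact h1
            · exact h1
        set C := insert m (insert b A) with hC
        have hCB : S = C ∪ B := by
          rw [hC, Finset.insert_union, Finset.insert_union, hdecomp]
        have hCmem : ∀ c ∈ C, c ≤ b ∧ π c ≤ b := by
          intro c hc
          rcases Finset.mem_insert.mp hc with rfl | hc'
          · exact ⟨le_of_lt hmb, le_of_eq hb_def.symm⟩
          · rcases Finset.mem_insert.mp hc' with rfl | hc''
            · exact ⟨le_refl _, hπb ▸ le_of_lt hmb⟩
            · rw [hA, Finset.mem_filter] at hc''
              have := hclA c (by rw [hA, Finset.mem_filter]; exact hc'')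
              rw [hA, Finset.mem_filter] at this
              exact ⟨le_of_lt hc''.2.2, le_of_lt this.2.2⟩
        have hZsplit : Zsum π S = Zsum π C + Zsum π B - 1 := by
          rw [hCB]
          apply Zsum_union
          · rw [Finset.disjoint_left]
            intro c hc hcB
            rw [hBd, Finset.mem_filter] at hcB
            exact absurd (lt_of_le_of_lt (hCmem c hc).1 hcB.2) (lt_irrefl c)
          · intro c hc y hy
            have hy' := hclB y hy
            rw [hBd, Finset.mem_filter] at hy hy'
            constructor
            · rintro ⟨-, h2⟩
              exact absurd (lt_of_le_of_lt (hCmem c hc).2 hy'.2) (not_lt.mpr (le_of_lt h2))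
            · rintro ⟨h1, -⟩
              exact absurd (lt_of_le_of_lt (hCmem c hc).1 hy.2) (not_lt.mpr (le_of_lt h1))
        have hmbA : m ∉ insert b A := by
          intro hmem
          rcases Finset.mem_insert.mp hmem with h | h
          · exact absurd hmb (by rw [h]; exact lt_irrefl b)
          · exact hmA h
        have hZC : Zsum π C = Zsum π A := by
          rw [hC, Zsum_insert π hmbA, Zsum_insert π hbA, neg_neg]
          · -- compat of b with A
            intro y hy
            have hy' := hclA y hy
            rw [hA, Finset.mem_filter] at hy hy'
            constructor
            · intro h1; exact absurd (h1.trans hy.2.2) (lt_irrefl b)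
            · intro h1; rw [hπb]; exact hy'.2.1
          · -- compat of m with insert b A
            intro y hy
            constructor
            · intro h1
              rw [← hb_def]
              rcases Finset.mem_insert.mp hy with h | hy'
              · rw [h, hπb]; exact hmb
              · have := hclA y hy'
                rw [hA, Finset.mem_filter] at this
                exact this.2.2
            · intro h1
              exfalso
              rcases Finset.mem_insert.mp hy with h | hy'
              · rw [h] at h1
                exact absurd (h1.trans hmb) (lt_irrefl _)
              · rw [hA, Finset.mem_filter] at hy'
                exact absurd (h1.trans hy'.2.1) (lt_irrefl _)
        have hAss : A ⊂ S := ⟨hAS, fun hcon => hmA (hcon hmS)⟩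
        have hBss : B ⊂ S := ⟨hBS, fun hcon => hmB (hcon hmS)⟩
        have hZA := ih A hAss hclA (fun i hi => hinv i (hAS hi))
          (fun a ha c hc => hnc a (hAS ha) c (hAS hc))
        have hZB := ih B hBss hclB (fun i hi => hinv i (hBS hi))
          (fun a ha c hc => hnc a (hBS ha) c (hBS hc))
        -- fixed point count
        have hABdisj : Disjoint A B := by
          rw [Finset.disjoint_left]
          intro x hx hx'
          rw [hA, Finset.mem_filter] at hx
          rw [hBd, Finset.mem_filter] at hx'
          exact absurd (hx.2.2.trans hx'.2) (lt_irrefl x)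
        have hfp : (S.filter (fun i => π i = i)).card
            = (A.filter (fun i => π i = i)).card + (B.filter (fun i => π i = i)).card := by
          rw [hdecomp, Finset.filter_insert, if_neg hfix, Finset.filter_insert,
            if_neg (by rw [hπb]; exact fun e => absurd (e ▸ hmb) (lt_irrefl m)),
            Finset.filter_union]
          exact Finset.card_union_of_disjoint
            (Finset.disjoint_filter_filter hABdisj)
        rw [hZsplit, hZC, hZA, hZB, hfp]
        push_cast
        ring


lemma noncross_of_avoids {n : ℕ} (π : Fin n → Fin n)
    (hinv : Function.Involutive π) (hav : Avoids π pat3412) :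
    ∀ a b : Fin n, a < b → b < π a → ¬ π a < π b := by
  intro a b h1 h2 h3
  apply hav
  have h4 : a < π b := h1.trans (h2.trans h3)
  have h5 : b < π b := h2.trans h3
  have h6 : a < π a := h1.trans h2
  refine ⟨![a, b, π a, π b], ?_, ?_⟩
  · rw [Fin.strictMono_iff_lt_succ]
    intro i
    fin_cases i
    · exact h1
    · exact h2
    · exact h3
  · intro x y
    fin_cases x <;> fin_cases y <;>
      simp [pat3412, hinv a, hinv b] <;>
      first
        | exact asymm h1
        | exact asymm h2
        | exact asymm h3
        | exact asymm h4
        | exact asymm h5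
        | exact asymm h6
        | assumption
        | exact le_of_lt (by assumption)

lemma tau_eq_card (k : ℕ) :
    tau π k = ((chains π Finset.univ).filter (fun T => T.card = k)).card := by
  classical
  have hmemforward : ∀ (f : {f : Fin k → Fin n // StrictMono f ∧
      ∀ a b : Fin k, a < b → π (f b) < π (f a)}),
      Finset.image f.1 Finset.univ ∈ (chains π Finset.univ).filter (fun T => T.card = k) := by
    rintro ⟨f, hf, hdec⟩
    rw [Finset.mem_filter]
    constructor
    · rw [mem_chains]
      refine ⟨Finset.subset_univ _, ?_⟩
      intro i hi j hj hij
      obtain ⟨x, -, rfl⟩ := Finset.mem_image.mp hi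
      obtain ⟨y, -, rfl⟩ := Finset.mem_image.mp hj
      exact hdec x y (hf.lt_iff_lt.mp hij)
    · rw [Finset.card_image_of_injective _ hf.injective, Finset.card_univ, Fintype.card_fin]
  have hbackward : ∀ (T : Finset (Fin n)),
      T ∈ (chains π Finset.univ).filter (fun T => T.card = k) →
      ∀ (h : T.card = k), StrictMono (fun i => T.orderEmbOfFin h i) ∧
        ∀ a b : Fin k, a < b → π ((fun i => T.orderEmbOfFin h i) b)
          < π ((fun i => T.orderEmbOfFin h i) a) := by
    intro T hT h
    rw [Finset.mem_filter, mem_chains] at hT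
    refine ⟨(T.orderEmbOfFin h).strictMono, ?_⟩
    intro x y hxy
    exact hT.1.2 _ (T.orderEmbOfFin_mem h x) _ (T.orderEmbOfFin_mem h y)
      ((T.orderEmbOfFin h).strictMono hxy)
  let e : {f : Fin k → Fin n // StrictMono f ∧ ∀ a b : Fin k, a < b → π (f b) < π (f a)} ≃
      {T // T ∈ (chains π Finset.univ).filter (fun T => T.card = k)} :=
    { toFun := fun f => ⟨Finset.image f.1 Finset.univ, hmemforward f⟩
      invFun := fun T => ⟨fun i => T.1.orderEmbOfFin
          ((Finset.mem_filter.mp T.2).2) i,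
        hbackward T.1 T.2 _⟩
      left_inv := by
        rintro ⟨f, hf, hdec⟩
        apply Subtype.ext
        exact (Finset.orderEmbOfFin_unique _ (fun x => Finset.mem_image_of_mem f
          (Finset.mem_univ x)) hf).symm
      right_inv := by
        rintro ⟨T, hT⟩
        apply Subtype.ext
        apply Finset.coe_injective
        push_cast
        rw [Set.image_univ]
        exact Finset.range_orderEmbOfFin T ((Finset.mem_filter.mp hT).2) }
  rw [tau, Nat.card_congr e, Nat.card_eq_fintype_card, Fintype.card_coe]

end Aux

/-- for every `π ∈ I_n(3412)`, the number of fixed points of `π` equals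
`Σ_{k=1}^n (-2)^{k-1} τ_k(π)`. -/
theorem stmt5 (n : ℕ) (π : Fin n → Fin n)
    (hinv : Function.Involutive π) (hav : Avoids π pat3412) :
    (Nat.card {i : Fin n // π i = i} : ℤ) =
      ∑ k ∈ Finset.Icc 1 n, (-2 : ℤ) ^ (k - 1) * (tau π k : ℤ) := by
  classical
  have hnc := noncross_of_avoids π hinv hav
  have hmain := main_lemma π Finset.univ (fun i _ => Finset.mem_univ _)
    (fun i _ => hinv i) (fun a _ b _ => hnc a b)
  have hmaps : ∀ T ∈ chains π Finset.univ, T.card ∈ Finset.range (n+1) := by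
    intro T hT
    rw [Finset.mem_range, Nat.lt_succ_iff]
    calc T.card ≤ (Finset.univ : Finset (Fin n)).card :=
          Finset.card_le_card (((mem_chains π).mp hT).1)
      _ = n := by rw [Finset.card_univ, Fintype.card_fin]
  have hgroup : Zsum π Finset.univ = ∑ k ∈ Finset.range (n+1),
      ((((chains π Finset.univ).filter (fun T => T.card = k)).card : ℤ) * (-2)^k) := by
    rw [Zsum, ← Finset.sum_fiberwise_of_maps_to hmaps (fun T => ((-2:ℤ))^T.card)]
    refine Finset.sum_congr rfl fun k _ => ?_
    have hcongr : ∀ T ∈ (chains π Finset.univ).filter (fun T => T.card = k),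
        ((-2:ℤ))^T.card = (-2)^k := by
      intro T hT
      rw [(Finset.mem_filter.mp hT).2]
    rw [Finset.sum_congr rfl hcongr, Finset.sum_const, nsmul_eq_mul]
  have hsplit : Finset.range (n+1) = insert 0 (Finset.Icc 1 n) := by
    ext x
    simp only [Finset.mem_range, Finset.mem_insert, Finset.mem_Icc]
    omega
  have hc0 : ((chains π Finset.univ).filter (fun T => T.card = 0)).card = 1 := by
    have hone : (chains π Finset.univ).filter (fun T => T.card = 0) = {∅} := by
      ext T
      simp only [Finset.mem_filter, Finset.mem_singleton, Finset.card_eq_zero]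
      constructor
      · rintro ⟨-, h⟩; exact h
      · rintro rfl
        exact ⟨(mem_chains π).mpr ⟨Finset.empty_subset _, isDec_empty π⟩, rfl⟩
    rw [hone, Finset.card_singleton]
  rw [hgroup, hsplit, Finset.sum_insert (by simp), hc0] at hmain
  simp only [pow_zero, Nat.cast_one, one_mul] at hmain
  have htau : ∀ k ∈ Finset.Icc 1 n,
      ((((chains π Finset.univ).filter (fun T => T.card = k)).card : ℤ) * (-2)^k)
        = -2 * ((-2:ℤ)^(k-1) * (tau π k : ℤ)) := by
    intro k hk
    obtain ⟨h1, -⟩ := Finset.mem_Icc.mp hk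
    have hpow : (-2:ℤ)^k = (-2)^(k-1) * (-2) := by
      rw [← pow_succ]
      congr 1
      omega
    rw [← tau_eq_card, hpow]
    ring
  rw [Finset.sum_congr rfl htau, ← Finset.mul_sum] at hmain
  have hfpcard : (Nat.card {i : Fin n // π i = i} : ℤ)
      = ((Finset.univ.filter (fun i => π i = i)).card : ℤ) := by
    rw [Nat.card_eq_fintype_card, Fintype.card_subtype]
  rw [hfpcard]
  have h2 : (-2:ℤ) * (∑ k ∈ Finset.Icc 1 n, (-2:ℤ)^(k-1) * (tau π k : ℤ))
      = -2 * ((Finset.univ.filter (fun i => π i = i)).card : ℤ) := by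
    linarith [hmain]
  exact (mul_left_cancel₀ (by norm_num : (-2:ℤ) ≠ 0) h2).symm
end

section
/- For all k ≥ 1, (Σ_{n≥0} |I_n(3412, δ_{2k})| xⁿ) · p_k(x) = p_{k−1}(x) as formal power series over ℚ, where δ_{2k} = (2k)(2k−1)…21 is the decreasing permutation of length 2k. (Equivalently, F_{2k…21}(x) = U_{k−1}((1−x)/(2x)) / (x·U_k((1−x)/(2x))).) -/
/-- The polynomials `p_k` (as power series over `ℚ`): `p_0 = 1`, `p_1 = 1 - x`,
`p_k = (1-x)·p_{k-1} - x²·p_{k-2}`; equivalently `p_k(x) = x^k · U_k((1-x)/(2x))` where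
`U_k` is the `k`-th Chebyshev polynomial of the second kind. -/
noncomputable def pQ : ℕ → PowerSeries ℚ
  | 0 => 1
  | 1 => 1 - PowerSeries.X
  | n + 2 => (1 - PowerSeries.X) * pQ (n + 1) - PowerSeries.X ^ 2 * pQ n

/-- The generating function `F_σ(x) = Σ_{n≥0} |I_n(3412, σ)| xⁿ`, where `I_n(3412, σ)` is the
set of involutions of length `n` avoiding both `3412` and `σ`. -/
noncomputable def F {m : ℕ} (σ : Fin m → Fin m) : PowerSeries ℚ :=
  PowerSeries.mk fun n =>
    (Nat.card {π : Fin n → Fin n //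
      Function.Involutive π ∧ Avoids π pat3412 ∧ Avoids π σ} : ℚ)

/-!
Split a 3412-avoiding involution `π` of length `n + 1` according to its first entry `π 0 = m`.
Then `π m = 0`, and any `0 < i < m` with `π i > m` would give the 3412 occurrence
`0 < i < m < π i` (values `m, π i, 0, i`); so `π` maps `{0, …, m}` to itself and is a direct sum
`α ⊕ β` whose first block `α` starts with its maximum. For `m = 0` the block is `1`; for `m > 0`
it is `(m, μ + 1, 0)` for an involution `μ` of length `m - 1`. Both `3412` and the decreasing
pattern `δ` are sum-indecomposable, so `α ⊕ β` avoids them iff `α` and `β` do, and a decreasing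
subsequence of `(m, μ + 1, 0)` of length `2k + 2` is one of `μ` of length `2k` extended by the two
ends. Writing `F_k` for the generating function, this gives `F_{k+1} = 1 + x (1 + x F_k) F_{k+1}`
and `F_0 = 0`, and induction against `p_{k+2} = (1 - x) p_{k+1} - x² p_k` yields `F_k p_k = p_{k-1}`.
-/

namespace Involution3412

open Function

variable {n m k : ℕ}

section Occurrence

variable {π : Fin n → Fin n} {π' : Fin m → Fin m} {σ : Fin k → Fin k}

def IsOccurrence (π : Fin n → Fin n) (σ : Fin k → Fin k) (f : Fin k → Fin n) : Prop :=
  StrictMono f ∧ ∀ a b, σ a < σ b ↔ π (f a) < π (f b)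

lemma contains_iff_exists_isOccurrence : Contains π σ ↔ ∃ f, IsOccurrence π σ f := Iff.rfl

lemma IsOccurrence.comp {g : Fin m → Fin n} {f : Fin k → Fin m} (hg : IsOccurrence π π' g)
    (hf : IsOccurrence π' σ f) : IsOccurrence π σ (g ∘ f) :=
  ⟨hg.1.comp hf.1, fun a b => (hf.2 a b).trans (hg.2 _ _)⟩

lemma IsOccurrence.of_comp {g : Fin m → Fin n} {f : Fin k → Fin m} (hg : IsOccurrence π π' g)
    (h : IsOccurrence π σ (g ∘ f)) : IsOccurrence π' σ f :=
  ⟨fun _ _ hab => hg.1.lt_iff_lt.mp (h.1 hab), fun a b => (h.2 a b).trans (hg.2 _ _).symm⟩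

lemma IsOccurrence.contains {g : Fin m → Fin n} (hg : IsOccurrence π π' g)
    (h : Contains π' σ) : Contains π σ :=
  let ⟨f, hf⟩ := h; ⟨g ∘ f, hg.comp hf⟩

lemma IsOccurrence.contains_of_forall_mem_range {g : Fin m → Fin n} {f : Fin k → Fin n}
    (hg : IsOccurrence π π' g) (hf : IsOccurrence π σ f) (hrange : ∀ a, f a ∈ Set.range g) :
    Contains π' σ := by
  choose f' hf' using hrange
  exact ⟨f', hg.of_comp (by rwa [show g ∘ f' = f from funext hf'])⟩

lemma isOccurrence_of_apply_eq {f e : Fin k → Fin n} (hf : StrictMono f) (he : StrictMono e)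
    (h : ∀ a, π (f a) = e (σ a)) : IsOccurrence π σ f :=
  ⟨hf, fun a b => by rw [h, h, he.lt_iff_lt]⟩

lemma isOccurrence_rev_iff {f : Fin k → Fin n} :
    IsOccurrence π Fin.rev f ↔ StrictMono f ∧ StrictAnti (π ∘ f) := by
  refine and_congr_right fun _ => ⟨fun h a b hab => (h b a).mp (Fin.rev_lt_rev.mpr hab),
    fun h _ _ => ?_⟩
  rw [Fin.rev_lt_rev]
  exact h.lt_iff_gt.symm

lemma not_contains_of_lt (h : n < k) : ¬ Contains π σ :=
  fun ⟨f, hf⟩ => h.not_ge (Fin.le_of_injective f hf.1.injective)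

end Occurrence

/-- `σ` is not a direct sum `σ₁ ⊕ σ₂` of two nonempty patterns. -/
def SumIndecomposable (σ : Fin k → Fin k) : Prop :=
  ∀ s : Set (Fin k), IsLowerSet s → s.Nonempty → sᶜ.Nonempty → ∃ a ∈ s, ∃ b ∉ s, σ b < σ a

lemma sumIndecomposable_of_strictAnti {σ : Fin k → Fin k} (hσ : StrictAnti σ) :
    SumIndecomposable σ := by
  rintro s hs ⟨a, ha⟩ ⟨b, hb⟩
  exact ⟨a, ha, b, hb, hσ (lt_of_not_ge fun hba => hb (hs hba ha))⟩

lemma sumIndecomposable_of_lt {σ : Fin (k + 1) → Fin (k + 1)} (h : σ (Fin.last k) < σ 0) :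
    SumIndecomposable σ := by
  rintro s hs ⟨a, ha⟩ ⟨b, hb⟩
  exact ⟨0, hs (Fin.zero_le a) ha, Fin.last k, fun hl => hb (hs (Fin.le_last b) hl), h⟩

lemma sumIndecomposable_pat3412 : SumIndecomposable pat3412 :=
  sumIndecomposable_of_lt (by decide)

def directSum (α : Fin m → Fin m) (β : Fin n → Fin n) : Fin (m + n) → Fin (m + n) :=
  Fin.append (Fin.castAdd n ∘ α) (Fin.natAdd m ∘ β)

section DirectSum

variable {α α' : Fin m → Fin m} {β β' : Fin n → Fin n}

@[simp] lemma directSum_castAdd (i : Fin m) :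
    directSum α β (Fin.castAdd n i) = Fin.castAdd n (α i) := by
  simp [directSum]

@[simp] lemma directSum_natAdd (j : Fin n) :
    directSum α β (Fin.natAdd m j) = Fin.natAdd m (β j) := by
  simp [directSum]

lemma directSum_apply_lt {p : Fin (m + n)} (hp : (p : ℕ) < m) :
    (directSum α β p : ℕ) < m := by
  obtain ⟨i, rfl⟩ : ∃ i : Fin m, Fin.castAdd n i = p := ⟨⟨p, hp⟩, rfl⟩
  simp

lemma le_directSum_apply {p : Fin (m + n)} (hp : m ≤ (p : ℕ)) :
    m ≤ (directSum α β p : ℕ) := by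
  obtain ⟨j, rfl⟩ : ∃ j : Fin n, Fin.natAdd m j = p :=
    ⟨⟨p - m, by omega⟩, Fin.ext (by simp; omega)⟩
  simp

lemma isOccurrence_directSum_left : IsOccurrence (directSum α β) α (Fin.castAdd n) :=
  ⟨Fin.strictMono_castAdd n, by simp [(Fin.strictMono_castAdd n).lt_iff_lt]⟩

lemma isOccurrence_directSum_right : IsOccurrence (directSum α β) β (Fin.natAdd m) :=
  ⟨Fin.strictMono_natAdd m, by simp⟩

lemma involutive_directSum_iff :
    Involutive (directSum α β) ↔ Involutive α ∧ Involutive β := by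
  refine ⟨fun h => ⟨fun i => ?_, fun j => ?_⟩, fun ⟨hα, hβ⟩ p => ?_⟩
  · simpa using h (Fin.castAdd n i)
  · simpa using h (Fin.natAdd m j)
  · induction p using Fin.addCases <;> simp [hα _, hβ _]

lemma directSum_injective (h : directSum α β = directSum α' β') : α = α' ∧ β = β' :=
  ⟨funext fun i => by simpa using congrFun h (Fin.castAdd n i),
    funext fun j => by simpa using congrFun h (Fin.natAdd m j)⟩

lemma exists_directSum_eq {π : Fin (m + n) → Fin (m + n)} (hπ : Involutive π)
    (h : ∀ i : Fin m, (π (Fin.castAdd n i) : ℕ) < m) :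
    ∃ (α : Fin m → Fin m) (β : Fin n → Fin n), directSum α β = π := by
  have hβ : ∀ j : Fin n, m ≤ (π (Fin.natAdd m j) : ℕ) := by
    intro j
    by_contra! hj
    have hi : Fin.castAdd n ⟨_, hj⟩ = π (Fin.natAdd m j) := rfl
    have := h ⟨_, hj⟩
    rw [hi, hπ] at this
    simp at this
  refine ⟨fun i => ⟨π (Fin.castAdd n i), h i⟩,
    fun j => ⟨π (Fin.natAdd m j) - m, by have := (π (Fin.natAdd m j)).isLt; have := hβ j; omega⟩,
    funext fun p => ?_⟩
  induction p using Fin.addCases with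
  | left i => ext; simp
  | right j => ext; simp; have := hβ j; omega

theorem contains_directSum_iff {σ : Fin k → Fin k} (hσ : SumIndecomposable σ) :
    Contains (directSum α β) σ ↔ Contains α σ ∨ Contains β σ := by
  refine ⟨fun ⟨f, hf⟩ => ?_, fun h => h.elim isOccurrence_directSum_left.contains
    isOccurrence_directSum_right.contains⟩
  by_cases hl : ∀ a, (f a : ℕ) < m
  · exact .inl (isOccurrence_directSum_left.contains_of_forall_mem_range hf
      fun a => ⟨⟨f a, hl a⟩, rfl⟩)
  by_cases hr : ∀ a, m ≤ (f a : ℕ)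
  · exact .inr (isOccurrence_directSum_right.contains_of_forall_mem_range hf
      fun a => ⟨⟨f a - m, by have := (f a).isLt; have := hr a; omega⟩,
        Fin.ext (by simp; have := hr a; omega)⟩)
  obtain ⟨a, ha, b, hb, hba⟩ := hσ {a | (f a : ℕ) < m}
    (fun a b hba ha => (Fin.le_def.mp (hf.1.monotone hba)).trans_lt ha)
    (by simpa [Set.Nonempty] using hr) (by simpa [Set.Nonempty] using hl)
  have hlt := Fin.lt_def.mp ((hf.2 b a).mp hba)
  have := directSum_apply_lt (α := α) (β := β) ha
  have := le_directSum_apply (α := α) (β := β) (not_lt.mp hb)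
  omega

end DirectSum

/-- `(m + 1, μ + 1, 0)` in one-line notation. -/
def cap (μ : Fin m → Fin m) : Fin (m + 2) → Fin (m + 2) :=
  Fin.cons (Fin.last (m + 1)) (Fin.snoc (fun i => (μ i).castSucc.succ) 0)

section Cap

lemma castSucc_succ_lt_last (i : Fin m) : i.castSucc.succ < Fin.last (m + 1) := by
  rw [← Fin.succ_last, Fin.succ_lt_succ_iff]
  exact Fin.castSucc_lt_last i

lemma strictMono_castSucc_succ : StrictMono (fun i : Fin m => i.castSucc.succ) :=
  Fin.strictMono_succ.comp Fin.strictMono_castSucc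

lemma eq_zero_or_eq_castSucc_succ_or_eq_last (p : Fin (m + 2)) :
    p = 0 ∨ (∃ i : Fin m, p = i.castSucc.succ) ∨ p = Fin.last (m + 1) := by
  rcases Fin.eq_zero_or_eq_succ p with rfl | ⟨j, rfl⟩
  · exact .inl rfl
  rcases Fin.eq_castSucc_or_eq_last j with ⟨i, rfl⟩ | rfl
  · exact .inr (.inl ⟨i, rfl⟩)
  · exact .inr (.inr (Fin.succ_last m))

variable {μ : Fin m → Fin m}

@[simp] lemma cap_zero : cap μ 0 = Fin.last (m + 1) := rfl

@[simp] lemma cap_last : cap μ (Fin.last (m + 1)) = 0 := by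
  rw [← Fin.succ_last]
  simp [cap]

@[simp] lemma cap_castSucc_succ (i : Fin m) : cap μ i.castSucc.succ = (μ i).castSucc.succ := by
  simp [cap]

lemma isOccurrence_cap : IsOccurrence (cap μ) μ (fun i => i.castSucc.succ) :=
  ⟨strictMono_castSucc_succ, by simp⟩

lemma involutive_cap_iff : Involutive (cap μ) ↔ Involutive μ := by
  refine ⟨fun h i => by simpa using h i.castSucc.succ, fun h p => ?_⟩
  rcases eq_zero_or_eq_castSucc_succ_or_eq_last p with rfl | ⟨i, rfl⟩ | rfl <;> simp [h _]

lemma cap_injective : Injective (cap (m := m)) :=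
  fun _ _ h => funext fun i => by simpa using congrFun h i.castSucc.succ

lemma exists_cap_eq {α : Fin (m + 2) → Fin (m + 2)} (hα : Involutive α)
    (h0 : α 0 = Fin.last (m + 1)) : ∃ μ, cap μ = α := by
  have hlast : α (Fin.last (m + 1)) = 0 := by rw [← h0, hα]
  have hinner : ∀ i : Fin m, ∃ j : Fin m, α i.castSucc.succ = j.castSucc.succ := by
    intro i
    rcases eq_zero_or_eq_castSucc_succ_or_eq_last (α i.castSucc.succ) with h | h | h
    · rw [← hlast] at h
      exact absurd (hα.injective h) (castSucc_succ_lt_last i).ne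
    · exact h
    · rw [← h0] at h
      exact absurd (hα.injective h) (Fin.succ_ne_zero _)
  choose μ hμ using hinner
  refine ⟨μ, funext fun p => ?_⟩
  rcases eq_zero_or_eq_castSucc_succ_or_eq_last p with rfl | ⟨i, rfl⟩ | rfl <;> simp [h0, hlast, hμ]

lemma contains_cap_iff {σ : Fin (k + 1) → Fin (k + 1)} (h₀ : ∃ b, σ 0 < σ b)
    (hₗ : ∃ a, σ a < σ (Fin.last k)) : Contains (cap μ) σ ↔ Contains μ σ := by
  refine ⟨fun ⟨f, hf⟩ => isOccurrence_cap.contains_of_forall_mem_range hf fun a => ?_,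
    isOccurrence_cap.contains⟩
  rcases eq_zero_or_eq_castSucc_succ_or_eq_last (f a) with ha | ⟨i, hi⟩ | ha
  · have hf0 : f 0 = 0 := Fin.le_zero_iff.mp (ha ▸ hf.1.monotone (Fin.zero_le a))
    obtain ⟨b, hb⟩ := h₀
    have := (hf.2 0 b).mp hb
    rw [hf0, cap_zero] at this
    exact absurd this (not_lt_of_ge (Fin.le_last _))
  · exact ⟨i, hi.symm⟩
  · have hfl : f (Fin.last k) = Fin.last (m + 1) :=
      Fin.last_le_iff.mp (ha ▸ hf.1.monotone (Fin.le_last a))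
    obtain ⟨b, hb⟩ := hₗ
    have := (hf.2 b (Fin.last k)).mp hb
    rw [hfl, cap_last] at this
    exact absurd this (Fin.not_lt_zero _)

lemma contains_cap_rev_iff :
    Contains (cap μ) (Fin.rev : Fin (k + 2) → Fin (k + 2)) ↔
      Contains μ (Fin.rev : Fin k → Fin k) := by
  simp only [contains_iff_exists_isOccurrence, isOccurrence_rev_iff]
  constructor
  · rintro ⟨f, hf, hπf⟩
    have hinner : ∀ i : Fin k, ∃ j : Fin m, f i.castSucc.succ = j.castSucc.succ := by
      intro i
      have h0 : f 0 < f i.castSucc.succ := hf (Fin.succ_pos _)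
      have hl : f i.castSucc.succ < f (Fin.last (k + 1)) := hf (castSucc_succ_lt_last i)
      rcases eq_zero_or_eq_castSucc_succ_or_eq_last (f i.castSucc.succ) with h | h | h
      · exact absurd h0 (h ▸ Fin.not_lt_zero _)
      · exact h
      · exact absurd hl (h ▸ not_lt_of_ge (Fin.le_last _))
    choose g hg using hinner
    refine ⟨g, fun a b hab => ?_, fun a b hab => ?_⟩
    · simpa [hg] using hf (strictMono_castSucc_succ hab)
    · simpa [hg] using hπf (strictMono_castSucc_succ hab)
  · rintro ⟨g, hg, hμg⟩
    obtain ⟨F, hF0, hFi, hFl⟩ : ∃ F : Fin (k + 2) → Fin (m + 2), F 0 = 0 ∧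
        (∀ i, F i.castSucc.succ = (g i).castSucc.succ) ∧ F (Fin.last (k + 1)) = Fin.last (m + 1) :=
      ⟨Fin.cons 0 (Fin.snoc (fun i => (g i).castSucc.succ) (Fin.last (m + 1))), rfl,
        by simp, by rw [← Fin.succ_last]; simp⟩
    have hμg' (i j : Fin k) (h : i < j) : μ (g j) < μ (g i) := hμg h
    refine ⟨F, fun a b hab => ?_, fun a b hab => ?_⟩ <;>
    rcases eq_zero_or_eq_castSucc_succ_or_eq_last a with rfl | ⟨i, rfl⟩ | rfl <;>
    rcases eq_zero_or_eq_castSucc_succ_or_eq_last b with rfl | ⟨j, rfl⟩ | rfl <;>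
    simp_all [Fin.last_pos, castSucc_succ_lt_last, (castSucc_succ_lt_last _).not_gt, hg.lt_iff_lt]

end Cap

def avoidingInvolutions (k n : ℕ) : Set (Fin n → Fin n) :=
  {π | Involutive π ∧ Avoids π pat3412 ∧ Avoids π (Fin.rev : Fin (2 * k) → Fin (2 * k))}

def cappedInvolutions (k m : ℕ) : Set (Fin (m + 1) → Fin (m + 1)) :=
  {α | α ∈ avoidingInvolutions k (m + 1) ∧ α 0 = Fin.last m}

section Counting

lemma apply_castAdd_lt_of_avoids {π : Fin (m + 1 + n) → Fin (m + 1 + n)} (hπ : Involutive π)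
    (h34 : Avoids π pat3412) (h0 : π (Fin.castAdd n 0) = Fin.castAdd n (Fin.last m))
    (i : Fin (m + 1)) : (π (Fin.castAdd n i) : ℕ) < m + 1 := by
  by_contra! hi
  have hm : π (Fin.castAdd n (Fin.last m)) = Fin.castAdd n 0 := by rw [← h0, hπ]
  have hi0 : (i : ℕ) ≠ 0 := fun h => by
    rw [show i = 0 from Fin.ext h, h0] at hi; simp at hi
  have him : (i : ℕ) ≠ m := fun h => by
    rw [show i = Fin.last m from Fin.ext h, hm] at hi; simp at hi
  have hilt : (i : ℕ) < m := by have := i.isLt; omega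
  have h1 : Fin.castAdd n (0 : Fin (m + 1)) < Fin.castAdd n i :=
    Fin.lt_def.mpr (Nat.pos_of_ne_zero hi0)
  have h2 : Fin.castAdd n i < Fin.castAdd n (Fin.last m) := Fin.lt_def.mpr (by simpa using hilt)
  have h3 : Fin.castAdd n (Fin.last m) < π (Fin.castAdd n i) := Fin.lt_def.mpr (by simp; omega)
  -- the positions `0 < i < m < π i` carry the values `m, π i, 0, i`, a 3412
  have hmono : StrictMono
      ![Fin.castAdd n 0, Fin.castAdd n i, Fin.castAdd n (Fin.last m), π (Fin.castAdd n i)] := by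
    simp [strictMono_vecCons, h1, h2, h3]
  exact h34 ⟨_, isOccurrence_of_apply_eq hmono hmono fun a => by
    fin_cases a <;> simp [pat3412, h0, hm, hπ _]⟩

lemma avoidingInvolutions_eq_univ (hn : n ≤ 1) : avoidingInvolutions (k + 1) n = Set.univ := by
  have : Subsingleton (Fin n) := Fin.subsingleton_iff_le_one.mpr hn
  exact Set.eq_univ_of_forall fun π =>
    ⟨fun _ => Subsingleton.elim _ _, not_contains_of_lt (by omega), not_contains_of_lt (by omega)⟩

lemma card_avoidingInvolutions_zero : Nat.card (avoidingInvolutions (k + 1) 0) = 1 := by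
  simp [avoidingInvolutions_eq_univ]

lemma card_cappedInvolutions_zero : Nat.card (cappedInvolutions (k + 1) 0) = 1 := by
  have : cappedInvolutions (k + 1) 0 = Set.univ :=
    Set.eq_univ_of_forall fun α => ⟨by simp [avoidingInvolutions_eq_univ],
      Fin.ext (Nat.lt_one_iff.mp (α 0).isLt)⟩
  simp [this]

lemma directSum_mem_avoidingInvolutions_iff {α : Fin m → Fin m} {β : Fin n → Fin n} :
    directSum α β ∈ avoidingInvolutions k (m + n) ↔
      α ∈ avoidingInvolutions k m ∧ β ∈ avoidingInvolutions k n := by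
  simp only [avoidingInvolutions, Set.mem_ofPred_eq, Avoids, involutive_directSum_iff,
    contains_directSum_iff sumIndecomposable_pat3412,
    contains_directSum_iff (sumIndecomposable_of_strictAnti Fin.rev_strictAnti), not_or]
  tauto

lemma cap_mem_cappedInvolutions_iff {μ : Fin m → Fin m} :
    cap μ ∈ cappedInvolutions (k + 1) (m + 1) ↔ μ ∈ avoidingInvolutions k m := by
  have hrev : Contains (cap μ) (Fin.rev : Fin (2 * (k + 1)) → Fin (2 * (k + 1))) ↔
      Contains μ (Fin.rev : Fin (2 * k) → Fin (2 * k)) := contains_cap_rev_iff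
  simp only [cappedInvolutions, avoidingInvolutions, Set.mem_ofPred_eq, Avoids, involutive_cap_iff,
    contains_cap_iff (σ := pat3412) ⟨1, by decide⟩ ⟨2, by decide⟩, hrev, cap_zero, and_true]

lemma card_cappedInvolutions_succ :
    Nat.card (cappedInvolutions (k + 1) (m + 1)) = Nat.card (avoidingInvolutions k m) := by
  refine (Nat.card_congr (Equiv.ofBijective (fun μ : avoidingInvolutions k m =>
    (⟨cap μ, cap_mem_cappedInvolutions_iff.mpr μ.2⟩ : cappedInvolutions (k + 1) (m + 1)))
    ⟨fun μ μ' h => Subtype.ext (cap_injective (congrArg Subtype.val h)), ?_⟩)).symm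
  rintro ⟨α, hα⟩
  obtain ⟨μ, rfl⟩ := exists_cap_eq hα.1.1 hα.2
  exact ⟨⟨μ, cap_mem_cappedInvolutions_iff.mp hα⟩, rfl⟩

lemma card_fiber_eq_mul :
    Nat.card {π // π ∈ avoidingInvolutions k (m + 1 + n) ∧
        π (Fin.castAdd n 0) = Fin.castAdd n (Fin.last m)} =
      Nat.card (cappedInvolutions k m) * Nat.card (avoidingInvolutions k n) := by
  rw [← Nat.card_prod]
  refine (Nat.card_congr (Equiv.ofBijective
    (fun p : cappedInvolutions k m × avoidingInvolutions k n =>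
      ⟨directSum p.1 p.2, directSum_mem_avoidingInvolutions_iff.mpr ⟨p.1.2.1, p.2.2⟩,
        by simp [p.1.2.2]⟩) ⟨?_, ?_⟩)).symm
  · rintro ⟨⟨α, _⟩, ⟨β, _⟩⟩ ⟨⟨α', _⟩, ⟨β', _⟩⟩ h
    obtain ⟨rfl, rfl⟩ := directSum_injective (congrArg Subtype.val h)
    rfl
  · rintro ⟨π, hπ, h0⟩
    obtain ⟨α, β, rfl⟩ := exists_directSum_eq hπ.1 (apply_castAdd_lt_of_avoids hπ.1 hπ.2.1 h0)
    obtain ⟨hα, hβ⟩ := directSum_mem_avoidingInvolutions_iff.mp hπ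
    exact ⟨(⟨α, hα, by simpa using h0⟩, ⟨β, hβ⟩), rfl⟩

lemma card_fiber_congr {N N' : ℕ} (h : N = N') {p v : Fin N} {p' v' : Fin N'}
    (hp : (p : ℕ) = p') (hv : (v : ℕ) = v') :
    Nat.card {π // π ∈ avoidingInvolutions k N ∧ π p = v} =
      Nat.card {π // π ∈ avoidingInvolutions k N' ∧ π p' = v'} := by
  subst h
  obtain rfl := Fin.ext hp
  obtain rfl := Fin.ext hv
  rfl

open Finset in
theorem card_avoidingInvolutions_succ :
    Nat.card (avoidingInvolutions k (n + 1)) = ∑ p ∈ antidiagonal n,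
      Nat.card (cappedInvolutions k p.1) * Nat.card (avoidingInvolutions k p.2) := by
  have hfiber (v : Fin (n + 1)) :
      Nat.card {π // π ∈ avoidingInvolutions k (n + 1) ∧ π 0 = v} =
        Nat.card (cappedInvolutions k v) * Nat.card (avoidingInvolutions k (n - v)) := by
    rw [← card_fiber_eq_mul]
    exact card_fiber_congr (by omega) (by simp) (by simp)
  calc Nat.card (avoidingInvolutions k (n + 1))
      = ∑ v : Fin (n + 1), Nat.card {π // π ∈ avoidingInvolutions k (n + 1) ∧ π 0 = v} := by
        rw [← Nat.card_sigma]
        exact Nat.card_congr ((Equiv.sigmaFiberEquiv fun π : avoidingInvolutions k (n + 1) =>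
          π.1 0).symm.trans (Equiv.sigmaCongrRight fun v =>
            Equiv.subtypeSubtypeEquivSubtypeInter _ fun π : Fin (n + 1) → Fin (n + 1) => π 0 = v))
    _ = ∑ i ∈ range (n + 1),
          Nat.card (cappedInvolutions k i) * Nat.card (avoidingInvolutions k (n - i)) := by
        rw [Finset.sum_congr rfl fun v _ => hfiber v]
        exact Fin.sum_univ_eq_sum_range
          (fun i => Nat.card (cappedInvolutions k i) * Nat.card (avoidingInvolutions k (n - i))) _
    _ = _ := (Nat.sum_antidiagonal_eq_sum_range_succ
          (fun i j => Nat.card (cappedInvolutions k i) * Nat.card (avoidingInvolutions k j)) n).symm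

end Counting

section GeneratingFunction

open PowerSeries

noncomputable def genFun (k : ℕ) : PowerSeries ℚ :=
  mk fun n => (Nat.card (avoidingInvolutions k n) : ℚ)

@[simp] lemma coeff_genFun (k n : ℕ) :
    coeff n (genFun k) = (Nat.card (avoidingInvolutions k n) : ℚ) :=
  coeff_mk _ _

lemma genFun_zero : genFun 0 = 0 := by
  ext n
  have : avoidingInvolutions 0 n = ∅ :=
    Set.eq_empty_of_forall_notMem fun π hπ => hπ.2.2 ⟨Fin.elim0, fun a => a.elim0, fun a => a.elim0⟩
  simp [genFun, this]

lemma mk_card_cappedInvolutions (k : ℕ) :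
    mk (fun m => (Nat.card (cappedInvolutions (k + 1) m) : ℚ)) = 1 + X * genFun k := by
  ext m
  cases m with
  | zero => simp only [coeff_mk, card_cappedInvolutions_zero]; simp
  | succ m =>
    rw [coeff_mk, card_cappedInvolutions_succ, map_add, coeff_succ_X_mul, coeff_genFun]
    simp

lemma genFun_succ (k : ℕ) : genFun (k + 1) = 1 + X * ((1 + X * genFun k) * genFun (k + 1)) := by
  rw [← mk_card_cappedInvolutions]
  ext n
  cases n with
  | zero => rw [coeff_genFun, card_avoidingInvolutions_zero]; simp
  | succ n =>
    rw [coeff_genFun, card_avoidingInvolutions_succ, map_add, coeff_succ_X_mul, coeff_mul]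
    simp only [coeff_mk, coeff_genFun]
    simp

theorem genFun_mul_pQ (k : ℕ) : genFun (k + 1) * pQ (k + 1) = pQ k := by
  induction k with
  | zero =>
    have h := genFun_succ 0
    rw [genFun_zero] at h
    change genFun 1 * (1 - X) = 1
    linear_combination h
  | succ k ih =>
    change genFun (k + 2) * ((1 - X) * pQ (k + 1) - X ^ 2 * pQ k) = pQ (k + 1)
    linear_combination pQ (k + 1) * genFun_succ (k + 1) + X ^ 2 * genFun (k + 2) * ih

end GeneratingFunction

end Involution3412

/-- for `k ≥ 1`, `F_{2k…21}(x) · p_k(x) = p_{k-1}(x)` as formal power series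
over `ℚ`, where `2k…21` is the decreasing permutation of length `2k` (here `Fin.rev`). -/
theorem stmt6 (k : ℕ) (hk : 1 ≤ k) :
    F (Fin.rev : Fin (2 * k) → Fin (2 * k)) * pQ k = pQ (k - 1) := by
  obtain ⟨k, rfl⟩ := Nat.exists_eq_add_of_le' hk
  exact Involution3412.genFun_mul_pQ k
end

section
/- Let σ be a nonempty permutation of length m whose last entry is not 1. Then for all n ≥ 0, I_n(3412, (m+1)σ) = I_n(3412, (m+2)σ^{+1}1) as sets; here (m+1)σ denotes the permutation of length m+1 whose first entry is m+1 followed by σ, and (m+2)σ^{+1}1 denotes the permutation of length m+2 whose first entry is m+2, followed by σ with every entry increased by 1, followed by 1. -/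
/-- The permutation `(m+1) σ` of length `m+1` (0-indexed): first entry `m+1`, then `σ`. -/
def extTop {m : ℕ} (σ : Fin m → Fin m) : Fin (m + 1) → Fin (m + 1) := fun i =>
  if h0 : (i : ℕ) = 0 then ⟨m, by omega⟩
  else
    have hlt : (i : ℕ) - 1 < m := by have := i.isLt; omega
    ⟨(σ ⟨(i : ℕ) - 1, hlt⟩ : ℕ), by have := (σ ⟨(i : ℕ) - 1, hlt⟩).isLt; omega⟩

/-- The permutation `(m+2) σ^{+1} 1` of length `m+2` (written 0-indexed): first entry `m+2`,
then `σ` with every entry increased by `1`, then a final entry `1`. -/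
def extBoth {m : ℕ} (σ : Fin m → Fin m) : Fin (m + 2) → Fin (m + 2) := fun i =>
  if h0 : (i : ℕ) = 0 then ⟨m + 1, by omega⟩
  else if h1 : (i : ℕ) ≤ m then
    have hlt : (i : ℕ) - 1 < m := by omega
    ⟨(σ ⟨(i : ℕ) - 1, hlt⟩ : ℕ) + 1, by have := (σ ⟨(i : ℕ) - 1, hlt⟩).isLt; omega⟩
  else ⟨0, by omega⟩

def IsOccurrence {n k : ℕ} (π : Fin n → Fin n) (τ : Fin k → Fin k) (f : Fin k → Fin n) : Prop :=
  StrictMono f ∧ ∀ a b, τ a < τ b ↔ π (f a) < π (f b)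

def appendMin {k : ℕ} (τ : Fin k → Fin k) : Fin (k + 1) → Fin (k + 1) :=
  Fin.snoc (fun i => (τ i).succ) 0

def IsLeftToRightMax {n : ℕ} (π : Fin n → Fin n) (p : Fin n) : Prop :=
  ∀ x < p, π x < π p

section
variable {n k m : ℕ} {π : Fin n → Fin n}

/-- The arcs `{a, π a}` and `{b, π b}` of the involution cross. -/
theorem contains_pat3412_of_crossing (hπ : Function.Involutive π) {a b : Fin n}
    (hab : a < b) (hb : b < π a) (ha : π a < π b) : Contains π pat3412 := by
  refine ⟨![a, b, π a, π b], ?_, fun x y => ?_⟩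
  · simp [Fin.strictMono_iff_lt_succ, Fin.forall_fin_succ, hab, hb, ha]
  · fin_cases x <;> fin_cases y <;> simp [pat3412, hπ a, hπ b] <;> order

theorem Contains.of_appendMin {τ : Fin k → Fin k} (h : Contains π (appendMin τ)) :
    Contains π τ := by
  obtain ⟨f, hf, hfτ⟩ := h
  refine ⟨f ∘ Fin.castSucc, hf.comp Fin.strictMono_castSucc, fun a b => ?_⟩
  simpa [appendMin] using hfτ a.castSucc b.castSucc

theorem IsOccurrence.snoc {τ : Fin k → Fin k} {f : Fin k → Fin n} (h : IsOccurrence π τ f)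
    {r : Fin n} (hr : ∀ i, f i < r) (hπr : ∀ i, π r < π (f i)) :
    IsOccurrence π (appendMin τ) (Fin.snoc f r) := by
  obtain ⟨hf, hfτ⟩ := h
  refine ⟨fun a b hab => ?_, fun a b => ?_⟩
  · induction b using Fin.lastCases with
    | last => induction a using Fin.lastCases with
      | last => exact absurd hab (lt_irrefl _)
      | cast a => simpa using hr a
    | cast b => induction a using Fin.lastCases with
      | last => exact absurd hab (not_lt.2 (Fin.le_last _))
      | cast a => simpa using hf (Fin.castSucc_lt_castSucc_iff.1 hab)
  · induction b using Fin.lastCases <;> induction a using Fin.lastCases <;>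
      simp [appendMin, hfτ, hπr, Fin.succ_pos, (hπr _).not_gt]

theorem extBoth_eq_appendMin (σ : Fin m → Fin m) : extBoth σ = appendMin (extTop σ) := by
  funext i
  induction i using Fin.lastCases with
  | last => simp [extBoth, appendMin]
  | cast i =>
    rw [appendMin, Fin.snoc_castSucc, Fin.ext_iff]
    by_cases h : (i : ℕ) = 0 <;> simp [extBoth, extTop, h, Fin.is_le i]

theorem extTop_zero (σ : Fin m → Fin m) : extTop σ 0 = Fin.last m := by
  simp [extTop, Fin.ext_iff]

theorem extTop_succ (σ : Fin m → Fin m) (j : Fin m) : extTop σ j.succ = (σ j).castSucc := by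
  simp [extTop, Fin.ext_iff]

theorem isOccurrence_extTop_cons_iff {σ : Fin m → Fin m} {p : Fin n} {q : Fin m → Fin n} :
    IsOccurrence π (extTop σ) (Fin.cons p q) ↔
      IsOccurrence π σ q ∧ (∀ j, p < q j) ∧ ∀ j, π (q j) < π p := by
  simp only [IsOccurrence, Fin.strictMono_cons, Fin.forall_fin_succ, Fin.cons_zero, Fin.cons_succ,
    extTop_zero, extTop_succ, lt_irrefl, Fin.castSucc_lt_castSucc_iff, Fin.castSucc_lt_last]
  constructor
  · rintro ⟨⟨hpq, hq⟩, -, hqp⟩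
    exact ⟨⟨hq, fun a b => (hqp a).2 b⟩, hpq, fun j => (hqp j).1.1 trivial⟩
  · rintro ⟨⟨hq, hσq⟩, hpq, hqp⟩
    refine ⟨⟨hpq, hq⟩, ⟨trivial, fun j => ?_⟩, fun j => ⟨iff_of_true trivial (hqp j), hσq j⟩⟩
    exact iff_of_false (Fin.castSucc_lt_last _).not_gt (hqp j).not_gt

theorem lt_apply_of_lt_apply (hπ : Function.Involutive π) (h3412 : Avoids π pat3412)
    {p y : Fin n} (hpy : p < π y) (hyp : π y < π p) : y < π p := by
  rcases lt_trichotomy y (π p) with hlt | rfl | hgt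
  · exact hlt
  · simp [hπ p] at hpy
  · exact absurd (contains_pat3412_of_crossing hπ hpy hyp (by rwa [hπ y])) h3412

theorem IsLeftToRightMax.lt_apply (hπ : Function.Involutive π) (h3412 : Avoids π pat3412)
    {p y z : Fin n} (hp : IsLeftToRightMax π p) (hpy : p < y) (hyz : y < z)
    (hz : π y < π z) (hzp : π z < π p) : p < π y := by
  rcases lt_trichotomy (π y) p with hlt | heq | hgt
  · rcases lt_trichotomy y (π p) with hy | rfl | hy
    · exact absurd (contains_pat3412_of_crossing hπ hlt (by rwa [hπ y]) (by rwa [hπ y])) h3412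
    · simp [hπ p] at hlt
    · exact absurd (hπ y ▸ hp _ hlt) hy.not_gt
  · have hpy' : π p = y := by rw [← heq, hπ y]
    exact absurd (contains_pat3412_of_crossing hπ (heq ▸ hz) hzp (by rwa [hπ z, hpy'])) h3412
  · exact hgt

theorem exists_isLeftToRightMax_of_contains_extTop {σ : Fin m → Fin m}
    (h : Contains π (extTop σ)) :
    ∃ p q, IsOccurrence π σ q ∧ (∀ j, p < q j) ∧ (∀ j, π (q j) < π p) ∧ IsLeftToRightMax π p := by
  obtain ⟨f, hf⟩ : ∃ f, IsOccurrence π (extTop σ) f := h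
  rw [← Fin.cons_self_tail f, isOccurrence_extTop_cons_iff] at hf
  obtain ⟨hq, hpq, hqp⟩ := hf
  generalize f 0 = p at hpq hqp
  induction p using WellFoundedLT.induction with
  | ind p ih =>
    by_cases hp : IsLeftToRightMax π p
    · exact ⟨p, _, hq, hpq, hqp, hp⟩
    · obtain ⟨x, hxp, hpx⟩ : ∃ x < p, π p ≤ π x := by simpa [IsLeftToRightMax] using hp
      exact ih x hxp (fun j => hxp.trans (hpq j)) (fun j => (hqp j).trans_le hpx)

theorem contains_appendMin_of_contains_extTop (hπ : Function.Involutive π)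
    (h3412 : Avoids π pat3412) {σ : Fin m → Fin m} {s t : Fin m} (hs : ∀ j, σ s ≤ σ j)
    (ht : IsTop t) (hst : σ s ≠ σ t)
    (h : Contains π (extTop σ)) : Contains π (appendMin (extTop σ)) := by
  obtain ⟨p, q, hq, hpq, hqp, hp⟩ := exists_isLeftToRightMax_of_contains_extTop h
  have hpqs : p < π (q s) :=
    hp.lt_apply hπ h3412 (hpq s) (hq.1 (lt_of_le_of_ne (ht s) fun h => hst (h ▸ rfl)))
      ((hq.2 s t).1 (lt_of_le_of_ne (hs t) hst)) (hqp t)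
  have hpq' : ∀ j, p < π (q j) := fun j =>
    hpqs.trans_le (not_lt.1 fun hj => (hs j).not_gt ((hq.2 j s).2 hj))
  refine ⟨_, (isOccurrence_extTop_cons_iff.2 ⟨hq, hpq, hqp⟩).snoc (r := π p) ?_ ?_⟩
  · refine Fin.cases ?_ fun j => ?_
    · simpa using hpqs.trans (hqp s)
    · simpa using lt_apply_of_lt_apply hπ h3412 (hpq' j) (hqp j)
  · refine Fin.cases ?_ fun j => ?_
    · simpa [hπ p] using hpqs.trans (hqp s)
    · simpa [hπ p] using hpq' j

end

/-- if `σ` is a nonempty permutation of length `m` whose last entry is not `1`,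
then `I_n(3412, (m+1)σ) = I_n(3412, (m+2)σ^{+1}1)` for all `n`. -/
theorem stmt9 (m : ℕ) (hm : 1 ≤ m) (σ : Fin m → Fin m) (hbij : Function.Bijective σ)
    (hlast : (σ ⟨m - 1, by omega⟩ : ℕ) ≠ 0) :
    ∀ n : ℕ,
      {π : Fin n → Fin n |
        Function.Involutive π ∧ Avoids π pat3412 ∧ Avoids π (extTop σ)} =
      {π : Fin n → Fin n |
        Function.Involutive π ∧ Avoids π pat3412 ∧ Avoids π (extBoth σ)} := by
  intro n
  obtain ⟨s, hs⟩ := hbij.2 ⟨0, hm⟩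
  have hmin : ∀ j, σ s ≤ σ j := fun j => by simp [Fin.le_def, hs]
  have htop : IsTop (⟨m - 1, by omega⟩ : Fin m) := fun j => Fin.le_def.2 (by simp; omega)
  have hst : σ s ≠ σ ⟨m - 1, by omega⟩ := fun h => hlast (by rw [← h, hs])
  ext π
  simp only [Set.mem_ofPred_eq, extBoth_eq_appendMin]
  refine and_congr_right fun hπ => and_congr_right fun h3412 => not_congr ?_
  exact ⟨contains_appendMin_of_contains_extTop hπ h3412 hmin htop hst, Contains.of_appendMin⟩
end

section
/- Let π be a permutation of length m ≥ 2 that is complete (for no k with 1 ≤ k < m do the first k entries of π form the set {1,…,k}), with π(1) ≠ m and π(m) ≠ 1. Then I_n(3412, π) = I_n(3412) for all n ≥ 0; that is, every involution that avoids 3412 also avoids π. -/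
/-!
An involution avoiding 3412 also avoids 2413: for an occurrence `i < j < k < l` of 2413 in `τ`,
one of the pairs `(i, j)`, `(i, τ k)`, `(τ k, j)`, `(τ k, τ l)` is a pair `x < y < τ x < τ y`,
which together with its mirror image `(τ x, τ y)` is a 3412. As 3142 is the inverse of 2413 and
`τ = τ⁻¹`, it avoids 3142 as well. So it suffices that `π` contains 2413, 3142 or 3412. If not,
`π` is separable, hence a direct or a skew sum. Completeness excludes a direct sum. In a skew
sum, the maximum lies strictly after position `0` (as `π 0 ≠ m - 1`) and before the cut, the
minimum after the cut and strictly before position `m - 1`; with the two endpoints they form a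
3412.
-/

open Function OrderDual

def pat2413 : Fin 4 → Fin 4 := ![1, 3, 0, 2]

def pat3142 : Fin 4 → Fin 4 := ![2, 0, 3, 1]

lemma strictMono_vec₄ {α : Type*} [Preorder α] {a b c d : α} (hab : a < b) (hbc : b < c)
    (hcd : c < d) : StrictMono ![a, b, c, d] := by
  simp [Fin.strictMono_iff_lt_succ, Fin.forall_fin_succ, hab, hbc, hcd]

section Patterns

variable {n k : ℕ} {τ : Fin n → Fin n}

theorem Contains.trans {m : ℕ} {π : Fin m → Fin m} {σ : Fin k → Fin k} (hπ : Contains τ π)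
    (hσ : Contains π σ) : Contains τ σ := by
  obtain ⟨f, hf, hfπ⟩ := hπ
  obtain ⟨g, hg, hgσ⟩ := hσ
  exact ⟨f ∘ g, hf.comp hg, fun a b => (hgσ a b).trans (hfπ (g a) (g b))⟩

theorem contains_of_strictMono {σ σ' : Fin k → Fin k} (hσ : LeftInverse σ' σ)
    {f : Fin k → Fin n} (hf : StrictMono f) (hτf : StrictMono (τ ∘ f ∘ σ')) :
    Contains τ σ :=
  ⟨f, hf, fun a b => by
    simpa only [comp_apply, hσ a, hσ b] using (hτf.lt_iff_lt (a := σ a) (b := σ b)).symm⟩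

variable {p q r s : Fin n}

theorem contains_pat3412 (hpq : p < q) (hqr : q < r) (hrs : r < s)
    (h₁ : τ r < τ s) (h₂ : τ s < τ p) (h₃ : τ p < τ q) : Contains τ pat3412 := by
  refine contains_of_strictMono (σ' := pat3412) (by decide) (strictMono_vec₄ hpq hqr hrs) ?_
  convert strictMono_vec₄ h₁ h₂ h₃ using 1
  funext i; fin_cases i <;> rfl

theorem contains_pat2413 (hpq : p < q) (hqr : q < r) (hrs : r < s)
    (h₁ : τ r < τ p) (h₂ : τ p < τ s) (h₃ : τ s < τ q) : Contains τ pat2413 := by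
  refine contains_of_strictMono (σ' := pat3142) (by decide) (strictMono_vec₄ hpq hqr hrs) ?_
  convert strictMono_vec₄ h₁ h₂ h₃ using 1
  funext i; fin_cases i <;> rfl

theorem contains_pat3142 (hpq : p < q) (hqr : q < r) (hrs : r < s)
    (h₁ : τ q < τ s) (h₂ : τ s < τ p) (h₃ : τ p < τ r) : Contains τ pat3142 := by
  refine contains_of_strictMono (σ' := pat2413) (by decide) (strictMono_vec₄ hpq hqr hrs) ?_
  convert strictMono_vec₄ h₁ h₂ h₃ using 1
  funext i; fin_cases i <;> rfl

end Patterns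

section Involutions

variable {n : ℕ} {τ : Fin n → Fin n}

theorem Function.Involutive.contains_pat3412_of_lt (hτ : Involutive τ) {x y : Fin n}
    (hxy : x < y) (hy : y < τ x) (hτxy : τ x < τ y) : Contains τ pat3412 :=
  contains_pat3412 hxy hy hτxy (by rwa [hτ, hτ]) (by rwa [hτ]) hτxy

theorem Function.Involutive.contains_pat3412_of_contains_pat2413 (hτ : Involutive τ)
    (h : Contains τ pat2413) : Contains τ pat3412 := by
  obtain ⟨f, hf, hfσ⟩ := h
  set i := f 0; set j := f 1; set k := f 2; set l := f 3
  have hij : i < j := hf (by decide)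
  have hjk : j < k := hf (by decide)
  have hkl : k < l := hf (by decide)
  have hki : τ k < τ i := (hfσ 2 0).1 (by decide)
  have hil : τ i < τ l := (hfσ 0 3).1 (by decide)
  have hlj : τ l < τ j := (hfσ 3 1).1 (by decide)
  rcases lt_trichotomy j (τ i) with hj | hj | hj
  · exact hτ.contains_pat3412_of_lt hij hj (hil.trans hlj)
  · have hτj : τ j = i := by rw [hj, hτ]
    exact absurd ((hil.trans hlj).trans_eq hτj) (hij.trans_eq hj).not_gt
  rcases lt_trichotomy i (τ k) with hi | hi | hi
  · exact hτ.contains_pat3412_of_lt hi hki (by rw [hτ]; exact hj.trans hjk)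
  · have hτi : τ i = k := by rw [hi, hτ]
    exact absurd (hj.trans hjk) (hτi ▸ lt_irrefl k)
  rcases lt_trichotomy k (τ j) with hk | hk | hk
  · exact hτ.contains_pat3412_of_lt (hi.trans hij) (by rw [hτ]; exact hjk) (by rwa [hτ])
  · have hτk : τ k = j := by rw [hk, hτ]
    exact absurd (hi.trans hij) (hτk ▸ lt_irrefl j)
  · exact hτ.contains_pat3412_of_lt (hki.trans hil) (by rw [hτ]; exact hlj.trans hk)
      (by rw [hτ, hτ]; exact hkl)

theorem Function.Involutive.contains_pat2413_of_contains_pat3142 (hτ : Involutive τ)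
    (h : Contains τ pat3142) : Contains τ pat2413 := by
  obtain ⟨f, hf, hfσ⟩ := h
  have h₁ : τ (f 1) < τ (f 3) := (hfσ 1 3).1 (by decide)
  have h₂ : τ (f 3) < τ (f 0) := (hfσ 3 0).1 (by decide)
  have h₃ : τ (f 0) < τ (f 2) := (hfσ 0 2).1 (by decide)
  refine contains_pat2413 h₁ h₂ h₃ ?_ ?_ ?_ <;> simp only [hτ _] <;> exact hf (by decide)

end Involutions

theorem Nat.exists_forall_lt_iff_le {P : ℕ → Prop} [DecidablePred P] {j : ℕ}
    (hP : ∀ t₁ t₂, t₁ < t₂ → t₂ < j → P t₁ → P t₂) (hpos : ∃ x < j, P x)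
    (hneg : ∃ x < j, ¬ P x) : ∃ i, 1 ≤ i ∧ i < j ∧ ∀ x < j, (P x ↔ i ≤ x) := by
  obtain ⟨hij, hi⟩ : Nat.find hpos < j ∧ P (Nat.find hpos) := Nat.find_spec hpos
  have hiff : ∀ x < j, (P x ↔ Nat.find hpos ≤ x) := fun x hx =>
    ⟨fun h => Nat.find_min' hpos ⟨hx, h⟩, fun h =>
      (eq_or_lt_of_le h).elim (fun h => h ▸ hi) (fun h => hP _ x h hx hi)⟩
  obtain ⟨x, hx, hPx⟩ := hneg
  refine ⟨Nat.find hpos, Nat.one_le_iff_ne_zero.2 fun h => hPx ?_, hij, hiff⟩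
  exact (hiff x hx).2 (h ▸ x.zero_le)

section Separable

variable {α : Type*} [LinearOrder α]

/- A sum cut at `j` splits `f` on `[0, e)` as a direct sum of its parts on `[0, j)` and `[j, e)`.
Skew cuts and occurrences of 3142 in `f` are encoded as sum cuts and occurrences of 2413 in
`toDual ∘ f`, so that each argument is written once. -/
def IsSumCut (f : ℕ → α) (e j : ℕ) : Prop :=
  ∀ x y, x < j → j ≤ y → y < e → f x < f y

def HasCut (f : ℕ → α) (e : ℕ) : Prop :=
  ∃ j, 1 ≤ j ∧ j < e ∧ (IsSumCut f e j ∨ IsSumCut (toDual ∘ f) e j)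

def Occurs2413 (f : ℕ → α) (e : ℕ) : Prop :=
  ∃ p₁ p₂ p₃ p₄, p₁ < p₂ ∧ p₂ < p₃ ∧ p₃ < p₄ ∧ p₄ < e ∧
    f p₃ < f p₁ ∧ f p₁ < f p₄ ∧ f p₄ < f p₂

variable {f : ℕ → α} {e : ℕ}

theorem HasCut.of_toDual (h : HasCut (toDual ∘ f) e) : HasCut f e := by
  obtain ⟨j, hj, hje, hcut⟩ := h
  exact ⟨j, hj, hje, hcut.symm⟩

theorem Occurs2413.mono {e' : ℕ} (h : Occurs2413 f e) (hee' : e ≤ e') : Occurs2413 f e' := by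
  obtain ⟨p₁, p₂, p₃, p₄, h₁₂, h₂₃, h₃₄, h₄, hv⟩ := h
  exact ⟨p₁, p₂, p₃, p₄, h₁₂, h₂₃, h₃₄, h₄.trans_le hee', hv⟩

theorem hasCut_succ_of_isSumCut (hf : Set.InjOn f (Set.Iio (e + 1)))
    (h3142 : ¬ Occurs2413 (toDual ∘ f) (e + 1)) {j : ℕ} (hj : 1 ≤ j) (hje : j < e)
    (hcut : IsSumCut f e j) : HasCut f (e + 1) := by
  have hcmp : ∀ x < e, f x < f e ∨ f e < f x := fun x hx =>
    lt_or_gt_of_ne ((hf.ne_iff (Set.mem_Iio.2 (by omega)) (Set.mem_Iio.2 (by omega))).2 hx.ne)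
  by_cases hbelow : ∀ x < j, f x < f e
  · refine ⟨j, hj, by omega, Or.inl fun x y hx hy hye => ?_⟩
    rcases (Nat.lt_succ_iff_lt_or_eq.1 hye) with hye | rfl
    exacts [hcut x y hx hy hye, hbelow x hx]
  obtain ⟨x₀, hx₀, hx₀e⟩ : ∃ x₀ < j, f e < f x₀ := by
    obtain ⟨x₀, hx₀, h⟩ := not_forall₂.1 hbelow
    exact ⟨x₀, hx₀, (hcmp x₀ (by omega)).resolve_left h⟩
  by_cases habove : ∀ x < j, f e < f x
  · refine ⟨e, by omega, by omega, Or.inr fun x y hx hy hye => ?_⟩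
    obtain rfl : y = e := by omega
    rcases lt_or_ge x j with hxj | hxj
    exacts [habove x hxj, hx₀e.trans (hcut x₀ x hx₀ hxj hx)]
  obtain ⟨x₂, hx₂, hx₂e⟩ : ∃ x₂ < j, f x₂ < f e := by
    obtain ⟨x₂, hx₂, h⟩ := not_forall₂.1 habove
    exact ⟨x₂, hx₂, (hcmp x₂ (by omega)).resolve_right h⟩
  -- Above `f e`, the entries before `j` form a final segment, as otherwise they give 3142.
  have hup : ∀ t₁ t₂, t₁ < t₂ → t₂ < j → f e < f t₁ → f e < f t₂ := by
    intro t₁ t₂ h₁₂ h₂ h₁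
    refine (hcmp t₂ (by omega)).resolve_left fun h => h3142 ?_
    exact ⟨t₁, t₂, j, e, h₁₂, h₂, hje, by omega, hcut t₁ j (by omega) le_rfl hje, h₁, h⟩
  obtain ⟨i, hi, hij, hiff⟩ :=
    Nat.exists_forall_lt_iff_le hup ⟨x₀, hx₀, hx₀e⟩ ⟨x₂, hx₂, hx₂e.asymm⟩
  have hlow : ∀ x < i, f x < f e := fun x hx =>
    (hcmp x (by omega)).resolve_right fun h => hx.not_ge ((hiff x (by omega)).1 h)
  refine ⟨i, hi, by omega, Or.inl fun x y hx hy hye => ?_⟩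
  rcases lt_or_ge y j with hyj | hyj
  · exact (hlow x hx).trans ((hiff y hyj).2 hy)
  rcases (Nat.lt_succ_iff_lt_or_eq.1 hye) with hye | rfl
  exacts [hcut x y (by omega) hyj hye, hlow x hx]

theorem hasCut_of_not_occurs2413 (he : 2 ≤ e) (hf : Set.InjOn f (Set.Iio e))
    (h2413 : ¬ Occurs2413 f e) (h3142 : ¬ Occurs2413 (toDual ∘ f) e) : HasCut f e := by
  induction e, he using Nat.le_induction generalizing f with
  | base =>
    refine ⟨1, le_rfl, one_lt_two, ?_⟩
    rcases lt_or_gt_of_ne ((hf.ne_iff (x := 0) (y := 1) (by simp) (by simp)).2 zero_ne_one)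
      with h | h
    · exact Or.inl fun x y hx hy hy₂ => by obtain ⟨rfl, rfl⟩ : x = 0 ∧ y = 1 := (by omega); exact h
    · exact Or.inr fun x y hx hy hy₂ => by obtain ⟨rfl, rfl⟩ : x = 0 ∧ y = 1 := (by omega); exact h
  | succ e he ih =>
    obtain ⟨j, hj, hje, hcut | hcut⟩ :=
      ih (hf.mono (Set.Iio_subset_Iio e.le_succ)) (fun h => h2413 (h.mono e.le_succ))
        (fun h => h3142 (h.mono e.le_succ))
    · exact hasCut_succ_of_isSumCut hf h3142 hj hje hcut
    · exact (hasCut_succ_of_isSumCut (toDual.injective.comp_injOn hf) h2413 hj hje hcut).of_toDual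

end Separable

section Complete

variable {m : ℕ} {π : Fin m → Fin m}

theorem Function.Bijective.val_lt_of_forall_lt_of_le (hπ : Bijective π) {j : ℕ}
    (hcut : ∀ x y : Fin m, (x : ℕ) < j → j ≤ (y : ℕ) → π x < π y) {i : Fin m}
    (hi : (i : ℕ) < j) : (π i : ℕ) < j := by
  by_contra! hij
  let e := Equiv.ofBijective π hπ
  let J : Fin m := ⟨j, hij.trans_lt (π i).2⟩
  -- Pigeonhole: the `j` values below `J` would come from the `j - 1` positions below `J` other
  -- than `i`.
  have hmaps : Set.MapsTo e.symm (Finset.Iio J) ((Finset.Iio J).erase i) := by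
    intro v hv
    have hv : (v : ℕ) < j := (Finset.mem_Iio.1 hv : v < J)
    have hπv : π (e.symm v) = v := e.apply_symm_apply v
    refine Finset.mem_erase.2 ⟨fun h => ?_, Finset.mem_Iio.2 ?_⟩
    · have : (π i : ℕ) = v := by rw [← h, hπv]
      omega
    · by_contra! hle
      have : (π i : ℕ) < v := hπv ▸ hcut i _ hi hle
      omega
  have := Finset.card_le_card_of_injOn _ hmaps e.symm.injective.injOn
  rw [Finset.card_erase_of_mem (Finset.mem_Iio.2 (show i < J from hi)), Fin.card_Iio] at this
  simp only [J] at this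
  omega

theorem contains_pat2413_of_occurs2413 {F : ℕ → Fin m} (hF : ∀ x (hx : x < m), F x = π ⟨x, hx⟩)
    (h : Occurs2413 F m) : Contains π pat2413 := by
  obtain ⟨p₁, p₂, p₃, p₄, h₁₂, h₂₃, h₃₄, h₄, hv⟩ := h
  simp (disch := omega) only [hF] at hv
  exact contains_pat2413 (Fin.mk_lt_mk.2 h₁₂) (Fin.mk_lt_mk.2 h₂₃) (Fin.mk_lt_mk.2 h₃₄)
    hv.1 hv.2.1 hv.2.2

theorem contains_pat3142_of_occurs2413_toDual {F : ℕ → Fin m}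
    (hF : ∀ x (hx : x < m), F x = π ⟨x, hx⟩) (h : Occurs2413 (toDual ∘ F) m) :
    Contains π pat3142 := by
  obtain ⟨p₁, p₂, p₃, p₄, h₁₂, h₂₃, h₃₄, h₄, hv⟩ := h
  simp (disch := omega) only [comp_apply, toDual_lt_toDual, hF] at hv
  exact contains_pat3142 (Fin.mk_lt_mk.2 h₁₂) (Fin.mk_lt_mk.2 h₂₃) (Fin.mk_lt_mk.2 h₃₄)
    hv.2.2 hv.2.1 hv.1

theorem Function.Surjective.contains_pat3412_of_skewCut (hπ : Surjective π) {c : ℕ}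
    (hc : 1 ≤ c) (hcm : c < m) (hcut : ∀ x y : Fin m, (x : ℕ) < c → c ≤ (y : ℕ) → π y < π x)
    {p s : Fin m} (hp : (p : ℕ) = 0) (hs : (s : ℕ) = m - 1) (hfirst : (π p : ℕ) ≠ m - 1)
    (hlast : (π s : ℕ) ≠ 0) : Contains π pat3412 := by
  obtain ⟨q, hq⟩ := hπ ⟨m - 1, by omega⟩
  obtain ⟨r, hr⟩ := hπ ⟨0, by omega⟩
  have hpq : π p < π q := hq ▸ Fin.lt_def.2 ((Nat.le_sub_one_of_lt (π p).2).lt_of_ne hfirst)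
  have hrs : π r < π s := hr ▸ Fin.lt_def.2 (Nat.pos_of_ne_zero hlast)
  have hqc : (q : ℕ) < c := by
    by_contra! h
    exact (hcut p q (by omega) h).not_gt hpq
  have hrc : c ≤ (r : ℕ) := by
    by_contra! h
    exact (hcut r s h (by omega)).not_gt hrs
  have hq0 : (q : ℕ) ≠ 0 := fun h => hpq.ne (congrArg π (Fin.ext (hp.trans h.symm)))
  have hr1 : (r : ℕ) ≠ m - 1 := fun h => hrs.ne (congrArg π (Fin.ext (h.trans hs.symm)))
  exact contains_pat3412 (Fin.lt_def.2 (by omega)) (Fin.lt_def.2 (by omega))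
    (Fin.lt_def.2 (by have := r.2; omega)) hrs (hcut p s (by omega) (by omega)) hpq

theorem contains_pat2413_or_pat3142_or_pat3412 (hm : 2 ≤ m) (hπ : Bijective π)
    (hcomplete : ¬ ∃ j : ℕ, 1 ≤ j ∧ j < m ∧ ∀ i : Fin m, (i : ℕ) < j → (π i : ℕ) < j)
    (hfirst : (π ⟨0, Nat.zero_lt_of_lt hm⟩ : ℕ) ≠ m - 1)
    (hlast : (π ⟨m - 1, Nat.sub_one_lt_of_lt hm⟩ : ℕ) ≠ 0) :
    Contains π pat2413 ∨ Contains π pat3142 ∨ Contains π pat3412 := by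
  by_contra! ⟨h2413, h3142, h3412⟩
  let F : ℕ → Fin m := extend Fin.val π fun _ => π ⟨0, Nat.zero_lt_of_lt hm⟩
  have hF (x : ℕ) (hx : x < m) : F x = π ⟨x, hx⟩ := Fin.val_injective.extend_apply _ _ ⟨x, hx⟩
  have hFπ (x : Fin m) : F x = π x := Fin.val_injective.extend_apply _ _ x
  have hinj : Set.InjOn F (Set.Iio m) := fun x hx y hy hxy =>
    congrArg Fin.val (hπ.1 ((hF x hx).symm.trans (hxy.trans (hF y hy))))
  obtain ⟨c, hc, hcm, hsum | hskew⟩ := hasCut_of_not_occurs2413 hm hinj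
    (fun h => h2413 (contains_pat2413_of_occurs2413 hF h))
    (fun h => h3142 (contains_pat3142_of_occurs2413_toDual hF h))
  · refine hcomplete ⟨c, hc, hcm, fun i hi => hπ.val_lt_of_forall_lt_of_le (fun x y hx hy => ?_) hi⟩
    simpa only [hFπ] using hsum x y hx hy y.2
  · refine h3412 (hπ.2.contains_pat3412_of_skewCut hc hcm (fun x y hx hy => ?_) rfl rfl
      hfirst hlast)
    simpa only [comp_apply, toDual_lt_toDual, hFπ] using hskew x y hx hy y.2

end Complete

/-- if `π` is a complete permutation of length `m ≥ 2` (no proper initial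
segment of length `j` consists of `{1, …, j}`) with first entry different from `m` and last
entry different from `1`, then `I_n(3412, π) = I_n(3412)` for all `n`. -/
theorem stmt16 (m : ℕ) (hm : 2 ≤ m) (π : Fin m → Fin m) (hbij : Function.Bijective π)
    (hcomplete : ¬ ∃ j : ℕ, 1 ≤ j ∧ j < m ∧ ∀ i : Fin m, (i : ℕ) < j → (π i : ℕ) < j)
    (hfirst : (π ⟨0, by omega⟩ : ℕ) ≠ m - 1)
    (hlast : (π ⟨m - 1, by omega⟩ : ℕ) ≠ 0) :
    ∀ n : ℕ,
      {τ : Fin n → Fin n |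
        Function.Involutive τ ∧ Avoids τ pat3412 ∧ Avoids τ π} =
      {τ : Fin n → Fin n | Function.Involutive τ ∧ Avoids τ pat3412} := by
  intro n
  ext τ
  refine ⟨fun ⟨hτ, h3412, _⟩ => ⟨hτ, h3412⟩, fun ⟨hτ, h3412⟩ => ⟨hτ, h3412, fun hπ => ?_⟩⟩
  rcases contains_pat2413_or_pat3142_or_pat3412 hm hbij hcomplete hfirst hlast with h | h | h
  · exact h3412 (hτ.contains_pat3412_of_contains_pat2413 (hπ.trans h))
  · exact h3412 (hτ.contains_pat3412_of_contains_pat2413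
      (hτ.contains_pat2413_of_contains_pat3142 (hπ.trans h)))
  · exact h3412 (hπ.trans h)
end
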